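/- arXiv:2205.11630 — 5 statements merged into one kernel-verified Lean document; each statement's English description precedes it below -/
import Mathlib

section
/- (Kruskal–Katona, Lovász form) Let 1 ≤ k ≤ n, let A be a collection of k-element subsets of [n], and let z ≥ k be a real number with |A| = binom(z,k). Then the lower shadow satisfies |∂_* A| ≥ binom(z, k−1). -/
open Finset

open UV
open scoped FinsetFamily

/-- The generalized binomial coefficient `binom(z, k) = z(z−1)⋯(z−k+1)/k!` for real `z`. -/
noncomputable def rchoose (z : ℝ) (k : ℕ) : ℝ :=
  (∏ i ∈ Finset.range k, (z - i)) / (Nat.factorial k)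

lemma prod_desc (k : ℕ) : (∏ i ∈ Finset.range k, ((k : ℝ) - i)) = (Nat.factorial k : ℝ) := by
  induction k with
  | zero => simp
  | succ k ih =>
    rw [Finset.prod_range_succ']
    have h1 : ∀ i ∈ Finset.range k, ((k : ℝ) + 1 - ((i : ℝ) + 1)) = (k : ℝ) - i := by
      intro i _; ring
    push_cast
    rw [Finset.prod_congr rfl h1, ih, Nat.factorial_succ]
    push_cast; ring

lemma rchoose_self (k : ℕ) : rchoose k k = 1 := by
  rw [rchoose, prod_desc, div_self]
  positivity

lemma cast_lt_of_mem_range {i k : ℕ} (hi : i ∈ Finset.range k) : (i : ℝ) + 1 ≤ k := by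
  rw [Finset.mem_range] at hi; exact_mod_cast hi

lemma rchoose_nonneg {z : ℝ} {k : ℕ} (h : (k : ℝ) - 1 ≤ z) : 0 ≤ rchoose z k := by
  apply div_nonneg _ (by positivity)
  apply Finset.prod_nonneg
  intro i hi
  have := cast_lt_of_mem_range hi
  linarith

lemma rchoose_mono {a b : ℝ} {k : ℕ} (ha : (k : ℝ) - 1 ≤ a) (hab : a ≤ b) :
    rchoose a k ≤ rchoose b k := by
  have hfac : (0:ℝ) < Nat.factorial k := by positivity
  apply div_le_div_of_nonneg_right ?_ hfac.le
  apply Finset.prod_le_prod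
  · intro i hi; have := cast_lt_of_mem_range hi; linarith
  · intro i hi; linarith

lemma rchoose_strict_mono {a b : ℝ} {k : ℕ} (hk : 1 ≤ k) (ha : (k : ℝ) - 1 ≤ a) (hab : a < b) :
    rchoose a k < rchoose b k := by
  have hfac : (0:ℝ) < Nat.factorial k := by positivity
  rw [rchoose, rchoose, div_lt_div_iff_of_pos_right hfac]
  rcases eq_or_lt_of_le ha with heq | hlt
  · have hmem : k - 1 ∈ Finset.range k := by rw [Finset.mem_range]; omega
    have hcast : ((k - 1 : ℕ) : ℝ) = (k : ℝ) - 1 := by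
      push_cast [Nat.cast_sub hk]; ring
    have hzero : a - ((k-1:ℕ):ℝ) = 0 := by rw [hcast, ← heq]; ring
    rw [Finset.prod_eq_zero hmem hzero]
    apply Finset.prod_pos
    intro i hi
    have := cast_lt_of_mem_range hi
    linarith
  · apply Finset.prod_lt_prod
    · intro i hi; have := cast_lt_of_mem_range hi; linarith
    · intro i hi; linarith
    · exact ⟨0, by rw [Finset.mem_range]; omega, by simpa using hab⟩

lemma rchoose_one_le {z : ℝ} {k : ℕ} (h : (k : ℝ) ≤ z) : 1 ≤ rchoose z k := by
  have := rchoose_mono (k := k) (a := (k:ℝ)) (b := z) (by linarith) h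
  rw [rchoose_self] at this
  linarith

lemma rchoose_pascal (w : ℝ) (j : ℕ) :
    rchoose (w + 1) (j + 1) = rchoose w (j + 1) + rchoose w j := by
  unfold rchoose
  rw [Finset.prod_range_succ' (fun i => w + 1 - (i:ℕ)) j]
  have h1 : ∀ i ∈ Finset.range j, (w + 1 - ((i:ℕ) + 1 : ℕ)) = w - i := by
    intro i _; push_cast; ring
  rw [Finset.prod_congr rfl h1, Finset.prod_range_succ]
  have hj : ((j:ℕ).factorial : ℝ) ≠ 0 := by positivity
  have hj1 : ((j+1).factorial : ℝ) ≠ 0 := by positivity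
  rw [Nat.factorial_succ]
  push_cast
  field_simp
  ring

lemma rchoose_surj {j : ℕ} (hj : 1 ≤ j) {m : ℝ} (hm : 1 ≤ m) :
    ∃ w : ℝ, (j : ℝ) ≤ w ∧ rchoose w j = m := by
  have hcont : Continuous fun z : ℝ => rchoose z j := by
    unfold rchoose
    apply Continuous.div_const
    exact continuous_finset_prod _ (fun i _ => by continuity)
  set M : ℝ := j + m * (Nat.factorial j)
  have hfac : (1:ℝ) ≤ Nat.factorial j := by exact_mod_cast Nat.one_le_iff_ne_zero.2 (Nat.factorial_ne_zero j)
  have hmf : (0:ℝ) ≤ m * (Nat.factorial j) := mul_nonneg (by linarith) (by positivity)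
  have hjM : (j : ℝ) ≤ M := by simp only [M]; linarith
  have hM : m ≤ rchoose M j := by
    obtain ⟨j', rfl⟩ : ∃ j', j = j' + 1 := ⟨j - 1, by omega⟩
    have hone : ∀ i ∈ Finset.range (j'+1), (1:ℝ) ≤ M - i := by
      intro i hi
      have := cast_lt_of_mem_range hi
      have h2 : (i:ℝ) ≤ (j':ℝ) := by push_cast at this ⊢; linarith
      simp only [M]; push_cast; linarith
    have hbig : m * (Nat.factorial (j'+1)) ≤ ∏ i ∈ Finset.range (j'+1), (M - i) := by
      rw [Finset.prod_range_succ]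
      have h1le : (1:ℝ) ≤ ∏ i ∈ Finset.range j', (M - i) := by
        calc (1:ℝ) = ∏ _i ∈ Finset.range j', (1:ℝ) := by simp
        _ ≤ ∏ i ∈ Finset.range j', (M - i) := by
            apply Finset.prod_le_prod (by norm_num)
            intro i hi
            exact hone i (Finset.mem_range.2 (by rw [Finset.mem_range] at hi; omega))
      have hlast : M - (j' : ℝ) = m * (Nat.factorial (j'+1)) + 1 := by
        simp only [M]; push_cast; ring
      have hpos : (0:ℝ) ≤ M - (j' : ℝ) := by
        have := hone j' (Finset.mem_range.2 (by omega)); linarith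
      nlinarith
    rw [rchoose, le_div_iff₀ (by positivity)]
    linarith [hbig]
  have h1 : rchoose (j:ℝ) j = 1 := rchoose_self j
  have := intermediate_value_Icc hjM (hcont.continuousOn (s := Set.Icc (j:ℝ) M))
  have hmmem : m ∈ Set.Icc (rchoose (j:ℝ) j) (rchoose M j) := by
    rw [h1]; exact ⟨hm, hM⟩
  obtain ⟨w, hw, hweq⟩ := this hmmem
  exact ⟨w, hw.1, hweq⟩

variable {n : ℕ}

lemma compress_singleton {x y : Fin n} {s : Finset (Fin n)} (hx : x ∉ s) (hy : y ∈ s) :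
    UV.compress {x} {y} s = insert x (s.erase y) := by
  have hxy : x ≠ y := fun h => hx (h ▸ hy)
  rw [UV.compress_of_disjoint_of_le (by simpa using hx) (by simpa using hy)]
  ext a
  simp only [Finset.mem_sdiff, Finset.sup_eq_union, Finset.mem_union, Finset.mem_singleton,
    Finset.mem_insert, Finset.mem_erase]
  by_cases hax : a = x <;> simp [hax, hxy] <;> tauto

private def fmeasure (𝒜 : Finset (Finset (Fin n))) : ℕ := ∑ s ∈ 𝒜, ∑ a ∈ s, (a : ℕ)

lemma fmeasure_compression_lt {x y : Fin n} (hxy : x < y) {𝒜 : Finset (Finset (Fin n))}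
    (h : 𝓒 {x} {y} 𝒜 ≠ 𝒜) : fmeasure (𝓒 {x} {y} 𝒜) < fmeasure 𝒜 := by
  rw [UV.compression] at h ⊢
  have q : ∀ Q ∈ {A ∈ 𝒜 | UV.compress {x} {y} A ∉ 𝒜}, UV.compress {x} {y} Q ≠ Q := by
    simp_rw [Finset.mem_filter]
    intro Q hQ hh
    rw [hh] at hQ
    exact hQ.2 hQ.1
  have uA : {A ∈ 𝒜 | UV.compress {x} {y} A ∈ 𝒜} ∪ {A ∈ 𝒜 | UV.compress {x} {y} A ∉ 𝒜} = 𝒜 :=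
    Finset.filter_union_filter_not_eq _ _
  have ne₂ : {A ∈ 𝒜 | UV.compress {x} {y} A ∉ 𝒜}.Nonempty := by
    refine Finset.nonempty_iff_ne_empty.2 fun z => h ?_
    rw [Finset.filter_image, z, Finset.image_empty, Finset.union_empty]
    rwa [z, Finset.union_empty] at uA
  rw [fmeasure, fmeasure, Finset.sum_union UV.compress_disjoint]
  conv_rhs => rw [← uA]
  rw [Finset.sum_union (Finset.disjoint_filter_filter_not _ _ _), add_lt_add_iff_left,
    Finset.filter_image, Finset.sum_image UV.compress_injOn]
  refine Finset.sum_lt_sum_of_nonempty ne₂ fun Q hQ => ?_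
  have hQne := q Q hQ
  -- from hQne, deduce x ∉ Q and y ∈ Q
  have hcond : x ∉ Q ∧ y ∈ Q := by
    by_contra hc
    apply hQne
    rw [UV.compress, if_neg]
    rintro ⟨h1, h2⟩
    exact hc ⟨by simpa using h1, by simpa using h2⟩
  obtain ⟨hxQ, hyQ⟩ := hcond
  rw [compress_singleton hxQ hyQ]
  rw [Finset.sum_insert (fun hc => hxQ (Finset.mem_of_mem_erase hc))]
  have herase : ∑ a ∈ Q.erase y, (a:ℕ) + (y:ℕ) = ∑ a ∈ Q, (a:ℕ) := Finset.sum_erase_add _ _ hyQ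
  have : (x:ℕ) < (y:ℕ) := hxy
  omega

lemma exists_compressed {k : ℕ} (x : Fin n) (hx : ∀ y : Fin n, x ≤ y)
    (A : Finset (Finset (Fin n))) (hA : ∀ s ∈ A, s.card = k) :
    ∃ B : Finset (Finset (Fin n)), (∂ B).card ≤ (∂ A).card ∧ B.card = A.card ∧
      (∀ s ∈ B, s.card = k) ∧
      ∀ s ∈ B, x ∉ s → ∀ y ∈ s, insert x (s.erase y) ∈ B := by
  by_cases h : ∀ y : Fin n, IsCompressed {x} {y} A
  · refine ⟨A, le_rfl, rfl, hA, fun s hs hxs y hys => ?_⟩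
    have := UV.compress_mem_compression (u := {x}) (v := {y}) hs
    rw [(h y).eq, compress_singleton hxs hys] at this
    exact this
  · push_neg at h
    obtain ⟨y, hy⟩ := h
    have hyx : x ≠ y := by
      rintro rfl
      exact hy (UV.compression_self _ _)
    have hxy : x < y := lt_of_le_of_ne (hx y) hyx
    have hsized : ∀ s ∈ 𝓒 {x} {y} A, s.card = k := by
      have := Set.Sized.uvCompression (u := {x}) (v := {y}) (𝒜 := A) (r := k) rfl
        (fun s hs => hA s hs)
      exact fun s hs => this hs
    have hmeas := fmeasure_compression_lt hxy hy
    obtain ⟨B, h1, h2, h3, h4⟩ := exists_compressed x hx (𝓒 {x} {y} A) hsized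
    refine ⟨B, h1.trans ?_, h2.trans (UV.card_compression _ _ _), h3, h4⟩
    apply UV.card_shadow_compression_le
    intro a ha
    refine ⟨y, Finset.mem_singleton_self y, ?_⟩
    rw [Finset.mem_singleton] at ha
    subst ha
    simp only [Finset.erase_singleton]
    exact UV.compression_self _ _
termination_by fmeasure A

section Link
variable {x : Fin n} {B : Finset (Finset (Fin n))}

/-- The link of `x`: erase `x` from each member containing `x`. -/
def link (x : Fin n) (B : Finset (Finset (Fin n))) : Finset (Finset (Fin n)) :=
  (B.filter (x ∈ ·)).image (·.erase x)

lemma mem_link {t : Finset (Fin n)} :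
    t ∈ link x B ↔ ∃ s ∈ B, x ∈ s ∧ s.erase x = t := by
  simp [link, Finset.mem_image, Finset.mem_filter, and_assoc]

lemma notMem_of_mem_link {t : Finset (Fin n)} (ht : t ∈ link x B) : x ∉ t := by
  obtain ⟨s, _, _, rfl⟩ := mem_link.1 ht
  exact Finset.notMem_erase _ _

lemma card_link : (link x B).card = (B.filter (x ∈ ·)).card := by
  apply Finset.card_image_of_injOn
  intro a ha b hb hab
  rw [Finset.mem_coe, Finset.mem_filter] at ha hb
  simp only at hab
  rw [← Finset.insert_erase ha.2, hab, Finset.insert_erase hb.2]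

lemma link_subset_shadow : link x B ⊆ ∂ B := by
  intro t ht
  obtain ⟨s, hs, hxs, rfl⟩ := mem_link.1 ht
  exact Finset.erase_mem_shadow hs hxs

lemma insert_shadow_link_subset_shadow :
    (∂ (link x B)).image (insert x) ⊆ ∂ B := by
  intro t ht
  rw [Finset.mem_image] at ht
  obtain ⟨u, hu, rfl⟩ := ht
  rw [Finset.mem_shadow_iff] at hu
  obtain ⟨v, hv, a, hav, rfl⟩ := hu
  obtain ⟨s, hs, hxs, rfl⟩ := mem_link.1 hv
  have hax : a ≠ x := Finset.ne_of_mem_erase hav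
  have : insert x ((s.erase x).erase a) = s.erase a := by
    rw [Finset.erase_right_comm, Finset.insert_erase]
    exact Finset.mem_erase.2 ⟨fun h => hax h.symm, hxs⟩
  rw [this]
  exact Finset.erase_mem_shadow hs (Finset.mem_of_mem_erase hav)

lemma card_shadow_ge : (link x B).card + (∂ (link x B)).card ≤ (∂ B).card := by
  have hdisj : Disjoint (link x B) ((∂ (link x B)).image (insert x)) := by
    rw [Finset.disjoint_right]
    intro t ht ht'
    rw [Finset.mem_image] at ht
    obtain ⟨u, hu, rfl⟩ := ht
    exact notMem_of_mem_link ht' (Finset.mem_insert_self x u)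
  have hcardim : ((∂ (link x B)).image (insert x)).card = (∂ (link x B)).card := by
    apply Finset.card_image_of_injOn
    intro a ha b hb  hab
    have hxa : x ∉ a := by
      rw [Finset.mem_coe, Finset.mem_shadow_iff] at ha
      obtain ⟨s, hs, i, hi, rfl⟩ := ha
      exact fun hc => notMem_of_mem_link hs (Finset.mem_of_mem_erase hc)
    have hxb : x ∉ b := by
      rw [Finset.mem_coe, Finset.mem_shadow_iff] at hb
      obtain ⟨s, hs, i, hi, rfl⟩ := hb
      exact fun hc => notMem_of_mem_link hs (Finset.mem_of_mem_erase hc)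
    rw [← Finset.erase_insert hxa, hab, Finset.erase_insert hxb]
  calc (link x B).card + (∂ (link x B)).card
      = (link x B ∪ (∂ (link x B)).image (insert x)).card := by
        rw [Finset.card_union_of_disjoint hdisj, hcardim]
    _ ≤ (∂ B).card := Finset.card_le_card
        (Finset.union_subset link_subset_shadow insert_shadow_link_subset_shadow)

lemma shadow_filter_subset_link
    (hcomp : ∀ s ∈ B, x ∉ s → ∀ y ∈ s, insert x (s.erase y) ∈ B) :
    ∂ (B.filter (x ∉ ·)) ⊆ link x B := by
  intro t ht
  rw [Finset.mem_shadow_iff] at ht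
  obtain ⟨s, hs, y, hys, rfl⟩ := ht
  rw [Finset.mem_filter] at hs
  have hmem := hcomp s hs.1 hs.2 y hys
  rw [mem_link]
  refine ⟨insert x (s.erase y), hmem, Finset.mem_insert_self _ _, ?_⟩
  rw [Finset.erase_insert]
  exact fun hc => hs.2 (Finset.mem_of_mem_erase hc)

end Link


lemma rchoose_zero (z : ℝ) : rchoose z 0 = 1 := by simp [rchoose]

lemma main_lemma (m : ℕ) : ∀ (k n : ℕ), 1 ≤ k → ∀ (A : Finset (Finset (Fin n))),
    k + A.card ≤ m → (∀ s ∈ A, s.card = k) → ∀ z : ℝ, (k : ℝ) ≤ z →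
    (A.card : ℝ) = rchoose z k → rchoose z (k - 1) ≤ ((∂ A).card : ℝ) := by
  induction m with
  | zero => intro k n hk A hm; omega
  | succ m ih =>
    intro k n hk A hm hA z hz hcard
    have hone : (1 : ℝ) ≤ (A.card : ℝ) := hcard ▸ rchoose_one_le hz
    have hApos : 1 ≤ A.card := by exact_mod_cast hone
    have hAne : A.Nonempty := Finset.card_pos.1 hApos
    match k, hk with
    | 1, _ =>
      -- base case
      simp only [Nat.sub_self, rchoose_zero]
      obtain ⟨s, hs⟩ := hAne
      have hcard1 : s.card = 1 := hA s hs
      obtain ⟨y, rfl⟩ := Finset.card_eq_one.1 hcard1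
      have : (∅ : Finset (Fin n)) ∈ ∂ A := by
        have := Finset.erase_mem_shadow hs (Finset.mem_singleton_self y)
        simpa using this
      have : 1 ≤ (∂ A).card := Finset.card_pos.2 ⟨_, this⟩
      exact_mod_cast this
    | (j+2), _ =>
      have hzj : ((j : ℝ) + 2) ≤ z := by exact_mod_cast hz
      -- ground element
      obtain ⟨s₀, hs₀⟩ := hAne
      have hn : 0 < n := by
        have hc : s₀.card = j + 2 := hA s₀ hs₀
        have : s₀.Nonempty := Finset.card_pos.1 (by omega)
        obtain ⟨y, _⟩ := this
        exact y.pos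
      set x : Fin n := ⟨0, hn⟩ with hxdef
      have hx : ∀ y : Fin n, x ≤ y := fun y => by simp [Fin.le_def, hxdef]
      obtain ⟨B, hB1, hB2, hB3, hB4⟩ := exists_compressed x hx A hA
      set L := link x B with hLdef
      set C := B.filter (fun s => ¬ x ∈ s) with hCdef
      set F := B.filter (fun s => x ∈ s) with hFdef
      have hsplit : F.card + C.card = B.card := Finset.card_filter_add_card_filter_not _
      have hLcard : L.card = F.card := card_link
      have hBne : B.Nonempty := Finset.card_pos.1 (hB2 ▸ hApos)
      have hFne : F.Nonempty := by
        obtain ⟨s, hsB⟩ := hBne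
        by_cases hxs : x ∈ s
        · exact ⟨s, Finset.mem_filter.2 ⟨hsB, hxs⟩⟩
        · have hsne : s.Nonempty := Finset.card_pos.1 (by rw [hB3 s hsB]; omega)
          obtain ⟨y, hy⟩ := hsne
          refine ⟨insert x (s.erase y), Finset.mem_filter.2 ⟨hB4 s hsB hxs y hy, ?_⟩⟩
          exact Finset.mem_insert_self _ _
      have hCF : C.card < B.card := by
        have := Finset.card_pos.2 hFne
        omega
      have hshadowC : ∂ C ⊆ L := shadow_filter_subset_link hB4
      have hsizedL : ∀ t ∈ L, t.card = j + 1 := by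
        intro t ht
        obtain ⟨s, hsB, hxs, rfl⟩ := mem_link.1 ht
        rw [Finset.card_erase_of_mem hxs, hB3 s hsB]
        omega
      -- Claim: |L| ≥ rchoose (z-1) (j+1)
      have hL : rchoose (z - 1) (j + 1) ≤ (L.card : ℝ) := by
        by_contra hcon
        push_neg at hcon
        have hCcardR : (C.card : ℝ) = (A.card : ℝ) - (L.card : ℝ) := by
          rw [hLcard, ← hB2, ← hsplit]
          push_cast
          ring
        have hpascal : rchoose z (j + 2) = rchoose (z - 1) (j + 2) + rchoose (z - 1) (j + 1) := by
          have := rchoose_pascal (z - 1) (j + 1)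
          rw [show z - 1 + 1 = z by ring] at this
          exact this
        have hCbig : rchoose (z - 1) (j + 2) < (C.card : ℝ) := by
          rw [hCcardR, hcard]
          push_cast
          linarith
        have hCge0 : (0 : ℝ) ≤ rchoose (z - 1) (j + 2) := by
          apply rchoose_nonneg
          push_cast
          linarith
        have hCone : (1 : ℝ) ≤ (C.card : ℝ) := by
          have : (0 : ℝ) < (C.card : ℝ) := lt_of_le_of_lt hCge0 hCbig
          have : 0 < C.card := by exact_mod_cast this
          exact_mod_cast this
        obtain ⟨w, hw1, hw2⟩ := rchoose_surj (j := j + 2) (by omega) hCone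
        have hwz : z - 1 ≤ w := by
          by_contra hcon2
          push_neg at hcon2
          have := rchoose_mono (k := j + 2) (a := w) (b := z - 1)
            (by push_cast; push_cast at hw1; linarith) hcon2.le
          rw [hw2] at this
          linarith
        have hIH := ih (j + 2) n (by omega) C
          (by
            have : C.card < A.card := hB2 ▸ hCF
            omega)
          (fun s hs => hB3 s (Finset.mem_filter.1 hs).1) w hw1 hw2.symm
        rw [show j + 2 - 1 = j + 1 by omega] at hIH
        have hmono := rchoose_mono (k := j + 1) (a := z - 1) (b := w)
          (by push_cast; linarith) hwz
        have hsub : ((∂ C).card : ℝ) ≤ (L.card : ℝ) := by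
          exact_mod_cast Finset.card_le_card hshadowC
        linarith
      -- Get z' for the link
      have hz1 : ((j : ℝ) + 1) ≤ z - 1 := by linarith
      have hLone : (1 : ℝ) ≤ (L.card : ℝ) := by
        have := rchoose_one_le (k := j + 1) (z := z - 1) (by push_cast; linarith)
        linarith
      obtain ⟨w', hw'1, hw'2⟩ := rchoose_surj (j := j + 1) (by omega) hLone
      have hw'z : z - 1 ≤ w' := by
        by_contra hcon2
        push_neg at hcon2
        have := rchoose_strict_mono (k := j + 1) (by omega) (a := w') (b := z - 1)
          (by push_cast; push_cast at hw'1; linarith) hcon2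
        rw [hw'2] at this
        linarith
      have hIHL := ih (j + 1) n (by omega) L
        (by
          have h1 : L.card ≤ B.card := by
            rw [hLcard]; exact Finset.card_le_card (Finset.filter_subset _ _)
          have : L.card ≤ A.card := hB2 ▸ h1
          omega)
        hsizedL w' hw'1 hw'2.symm
      simp only [Nat.add_sub_cancel] at hIHL
      -- Final chain
      have hshadow := card_shadow_ge (x := x) (B := B)
      have hpascal2 : rchoose (w' + 1) (j + 1) = rchoose w' (j + 1) + rchoose w' j :=
        rchoose_pascal w' j
      have hfinal : rchoose z (j + 1) ≤ rchoose (w' + 1) (j + 1) := by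
        apply rchoose_mono (by push_cast; linarith) (by linarith)
      have hc1 : ((∂ B).card : ℝ) ≤ ((∂ A).card : ℝ) := by exact_mod_cast hB1
      have hc2 : (L.card : ℝ) + ((∂ L).card : ℝ) ≤ ((∂ B).card : ℝ) := by
        exact_mod_cast hshadow
      rw [show j + 2 - 1 = j + 1 by omega]
      linarith

/-- Kruskal–Katona, Lovász form: If `A` is a collection of `k`-element
subsets of `[n]` with `|A| = binom(z, k)` for a real `z ≥ k`, then
`|∂_* A| ≥ binom(z, k−1)`. -/
theorem statement_3 (n k : ℕ) (hk : 1 ≤ k) (hkn : k ≤ n)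
    (A : Finset (Finset (Fin n))) (hA : ∀ s ∈ A, s.card = k)
    (z : ℝ) (hz : (k : ℝ) ≤ z) (hcard : (A.card : ℝ) = rchoose z k) :
    rchoose z (k - 1) ≤ ((Finset.shadow A).card : ℝ) :=
  main_lemma (k + A.card) k n hk A le_rfl hA z hz hcard
end

section
/- For every k ≥ 1 and every nonempty A ⊆ L_k with |A| = a, the neighborhood in M satisfies |N(A)| − |A| ≥ (a/k)·ln( C(2k−1,k) / a ), where ln is the natural logarithm and C(2k−1,k) is the binomial coefficient. -/
open MeasureTheory Finset Filter

/-- The Bernoulli(p) measure on `Bool`. -/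
noncomputable def bern (p : ℝ) : Measure Bool :=
  ENNReal.ofReal p • Measure.dirac true + ENNReal.ofReal (1 - p) • Measure.dirac false

/-- Product measure: each coordinate is included independently with probability `p`. -/
noncomputable def pSpace (ι : Type*) [Fintype ι] (p : ℝ) : Measure (ι → Bool) :=
  Measure.pi fun _ => bern p

/-- The random subset determined by an outcome `ω`. -/
def sample {ι : Type*} [Fintype ι] (ω : ι → Bool) : Finset ι :=
  Finset.univ.filter (fun i => ω i = true)

/-- `L_k`: all `k`-element subsets of `[2k-1]`, one side of the middle-two-layers graph `M`. -/
def Lk (k : ℕ) : Finset (Finset (Fin (2 * k - 1))) :=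
  (Finset.univ : Finset (Fin (2 * k - 1))).powersetCard k

/-- `L_{k-1}`: all `(k-1)`-element subsets of `[2k-1]`, the other side of `M`. -/
def Lk1 (k : ℕ) : Finset (Finset (Fin (2 * k - 1))) :=
  (Finset.univ : Finset (Fin (2 * k - 1))).powersetCard (k - 1)

/-- The neighborhood in `M` of a set `A ⊆ L_k`: all `w ∈ L_{k-1}` contained in some `u ∈ A`. -/
def nbrLow (k : ℕ) (A : Finset (Finset (Fin (2 * k - 1)))) : Finset (Finset (Fin (2 * k - 1))) :=
  (Lk1 k).filter (fun w => ∃ u ∈ A, w ⊆ u)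

/-- The neighborhood in `M` of a set `A ⊆ L_{k-1}`: all `u ∈ L_k` containing some `w ∈ A`. -/
def nbrHigh (k : ℕ) (A : Finset (Finset (Fin (2 * k - 1)))) : Finset (Finset (Fin (2 * k - 1))) :=
  (Lk k).filter (fun u => ∃ w ∈ A, w ⊆ u)

/-- `A ⊆ L_k` is closed: no strictly larger `A' ⊆ L_k` has the same neighborhood. -/
def ClosedLow (k : ℕ) (A : Finset (Finset (Fin (2 * k - 1)))) : Prop :=
  ¬ ∃ A' : Finset (Finset (Fin (2 * k - 1))), A' ⊆ Lk k ∧ A ⊂ A' ∧ nbrLow k A' = nbrLow k A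

/-- `A ⊆ L_k` is 2-linked: no nonempty proper `B ⊊ A` with `N(B) ∩ N(A \ B) = ∅`. -/
def TwoLinkedLow (k : ℕ) (A : Finset (Finset (Fin (2 * k - 1)))) : Prop :=
  ¬ ∃ B : Finset (Finset (Fin (2 * k - 1))), B ⊂ A ∧ B.Nonempty ∧
      Disjoint (nbrLow k B) (nbrLow k (A \ B))

/-- `A ⊆ L_{k-1}` is closed: no strictly larger `A' ⊆ L_{k-1}` has the same neighborhood. -/
def ClosedHigh (k : ℕ) (A : Finset (Finset (Fin (2 * k - 1)))) : Prop :=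
  ¬ ∃ A' : Finset (Finset (Fin (2 * k - 1))), A' ⊆ Lk1 k ∧ A ⊂ A' ∧ nbrHigh k A' = nbrHigh k A

/-- `A ⊆ L_{k-1}` is 2-linked: no nonempty proper `B ⊊ A` with `N(B) ∩ N(A \ B) = ∅`. -/
def TwoLinkedHigh (k : ℕ) (A : Finset (Finset (Fin (2 * k - 1)))) : Prop :=
  ¬ ∃ B : Finset (Finset (Fin (2 * k - 1))), B ⊂ A ∧ B.Nonempty ∧
      Disjoint (nbrHigh k B) (nbrHigh k (A \ B))

section Statement4Helpers
open scoped FinsetFamily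


lemma bern_nat (t q : ℕ) : t^(q+1) + (q+1)*t^q ≤ (t+1)^(q+1) := by
  induction q with
  | zero => simp [pow_succ]
  | succ q ih =>
    have h2 : (t^(q+1) + (q+1)*t^q) * (t+1) ≤ (t+1)^(q+1) * (t+1) :=
      Nat.mul_le_mul_right _ ih
    have key : (t^(q+1) + (q+1)*t^q) * (t+1)
        = (t^(q+1+1) + (q+1+1)*t^(q+1)) + (q+1)*t^q := by ring
    have h3 : (t+1)^(q+1+1) = (t+1)^(q+1) * (t+1) := by ring
    omega

lemma pascal_id (m k : ℕ) (hk : 1 ≤ k) (hmk : k ≤ m) :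
    (m + 1 - k) * Nat.choose (m+1) k = (m+1) * Nat.choose m k := by
  obtain ⟨K, rfl⟩ : ∃ K, k = K + 1 := ⟨k - 1, by omega⟩
  have hp : Nat.choose (m+1) (K+1) = Nat.choose m K + Nat.choose m (K+1) :=
    Nat.choose_succ_succ m K
  have hs : Nat.choose m (K+1) * (K+1) = Nat.choose m K * (m - K) :=
    Nat.choose_succ_right_eq m K
  have h1 : (m + 1 - (K+1)) = m - K := by omega
  rw [hp, h1]
  have e1 : (m-K)*(Nat.choose m K + Nat.choose m (K+1))
      = Nat.choose m K * (m-K) + (m-K)*Nat.choose m (K+1) := by ring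
  rw [e1, ← hs]
  have e2 : K+1+(m-K) = m+1 := by omega
  calc Nat.choose m (K+1) * (K+1) + (m-K)*Nat.choose m (K+1)
      = (K+1+(m-K)) * Nat.choose m (K+1) := by ring
    _ = (m+1) * Nat.choose m (K+1) := by rw [e2]

-- main integer lemma: for k ≤ m ≤ 2k-1 :  N * (m-k+1)^k ≤ C(m,k) * k^k
lemma choose_pow_bound (k : ℕ) (hk : 1 ≤ k) :
    ∀ c, c ≤ k - 1 → Nat.choose (2*k-1) k * (k-c)^k ≤ Nat.choose (2*k-1-c) k * k^k := by
  intro c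
  induction c with
  | zero => intro _; simp
  | succ c ih =>
    intro hc
    have ihc := ih (by omega)
    set N := Nat.choose (2*k-1) k with hN
    set t := k - c - 1 with ht
    have htk : 1 ≤ t := by omega
    have hm1 : 2*k-1-c = (2*k-1-(c+1)) + 1 := by omega
    have hid : ((2*k-1-(c+1)) + 1 - k) * Nat.choose ((2*k-1-(c+1))+1) k
        = ((2*k-1-(c+1))+1) * Nat.choose (2*k-1-(c+1)) k :=
      pascal_id _ _ hk (by omega)
    have hmk : (2*k-1-(c+1)) + 1 - k = t := by omega
    have htk2 : k - c = t + 1 := by omega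
    have hsum : t + k = 2*k-1-c := by omega
    -- bernoulli : t*(t+1)^k ≥ (t+k)*t^k
    obtain ⟨K, rfl⟩ : ∃ K, k = K + 1 := ⟨k - 1, by omega⟩
    have hb : t^(K+1) + (K+1)*t^K ≤ (t+1)^(K+1) := bern_nat t K
    have hb2 : (t + (K+1))*t^(K+1) ≤ t*(t+1)^(K+1) := by
      have e : t*(t^(K+1) + (K+1)*t^K) = (t+(K+1))*t^(K+1) := by ring
      calc (t+(K+1))*t^(K+1) = t*(t^(K+1) + (K+1)*t^K) := e.symm
        _ ≤ t*(t+1)^(K+1) := Nat.mul_le_mul_left _ hb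
    -- multiply target by m1 := 2*k-1-c
    have hm1pos : 0 < 2*(K+1)-1-c := by omega
    refine Nat.le_of_mul_le_mul_left ?_ hm1pos
    calc (2*(K+1)-1-c) * (N * (K+1-(c+1))^(K+1))
        = N * ((t + (K+1)) * t^(K+1)) := by
          rw [hsum]; have : K+1-(c+1) = t := by omega
          rw [this]; ring
      _ ≤ N * (t*(t+1)^(K+1)) := Nat.mul_le_mul_left _ hb2
      _ = t * (N * (K+1-c)^(K+1)) := by rw [htk2]; ring
      _ ≤ t * (Nat.choose (2*(K+1)-1-c) (K+1) * (K+1)^(K+1)) := Nat.mul_le_mul_left _ ihc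
      _ = (t * Nat.choose (2*(K+1)-1-c) (K+1)) * (K+1)^(K+1) := by ring
      _ = ((2*(K+1)-1-c) * Nat.choose (2*(K+1)-1-(c+1)) (K+1)) * (K+1)^(K+1) := by
          rw [hm1, ← hmk, hid]
      _ = (2*(K+1)-1-c) * (Nat.choose (2*(K+1)-1-(c+1)) (K+1) * (K+1)^(K+1)) := by ring


lemma lym_ground {α : Type*} [DecidableEq α] {𝒜 : Finset (Finset α)} {S : Finset α} {r : ℕ}
    (hr : 1 ≤ r) (hsub : ∀ s ∈ 𝒜, s ⊆ S) (hsized : ∀ s ∈ 𝒜, s.card = r) :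
    𝒜.card * r ≤ (∂ 𝒜).card * (S.card - r + 1) := by
  classical
  have h1 : 𝒜.card * r = (𝒜.sigma fun s => s).card := by
    rw [Finset.card_sigma]
    rw [Finset.sum_congr rfl (fun s hs => hsized s hs)]
    simp [mul_comm]
  have h2 : ((∂ 𝒜).sigma fun w => S \ w).card ≤ (∂ 𝒜).card * (S.card - r + 1) := by
    rw [Finset.card_sigma]
    have : ∀ w ∈ ∂ 𝒜, (S \ w).card ≤ S.card - r + 1 := by
      intro w hw
      obtain ⟨s, hs, a, ha, rfl⟩ := Finset.mem_shadow_iff.1 hw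
      have hws : s.erase a ⊆ S := (Finset.erase_subset _ _).trans (hsub s hs)
      rw [Finset.card_sdiff_of_subset hws, Finset.card_erase_of_mem ha, hsized s hs]
      omega
    calc ∑ w ∈ ∂ 𝒜, (S \ w).card ≤ ∑ w ∈ ∂ 𝒜, (S.card - r + 1) := Finset.sum_le_sum this
      _ = (∂ 𝒜).card * (S.card - r + 1) := by simp [mul_comm]
  rw [h1]
  refine le_trans (Finset.card_le_card_of_injOn
    (fun p => ⟨p.1.erase p.2, p.2⟩) ?_ ?_) h2
  · rintro ⟨s, x⟩ hp
    rw [Finset.mem_coe, Finset.mem_sigma] at hp ⊢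
    obtain ⟨hs, hx⟩ := hp
    refine ⟨Finset.mem_shadow_iff.2 ⟨s, hs, x, hx, rfl⟩, ?_⟩
    exact Finset.mem_sdiff.2 ⟨hsub s hs hx, Finset.notMem_erase _ _⟩
  · rintro ⟨s, x⟩ hp ⟨t, y⟩ hq heq
    simp only [Finset.mem_coe, Finset.mem_sigma] at hp hq
    simp only [Sigma.mk.inj_iff, heq_iff_eq] at heq
    obtain ⟨h1', h2'⟩ := heq
    subst h2'
    have : s = t := by
      rw [← Finset.insert_erase hp.2, h1', Finset.insert_erase hq.2]
    simp [this]


lemma exists_initSeg' (n r a : ℕ) (ha : a ≤ Nat.choose n r) :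
    ∃ 𝒞 : Finset (Finset (Fin n)), Finset.Colex.IsInitSeg 𝒞 r ∧ 𝒞.card = a := by
  classical
  have hcard𝒮 : (Finset.powersetCard r (Finset.univ : Finset (Fin n))).card = Nat.choose n r := by
    rw [Finset.card_powersetCard, Finset.card_univ, Fintype.card_fin]
  have hM : ((Finset.powersetCard r (Finset.univ : Finset (Fin n))).image
      toColex).card = Nat.choose n r := by
    rw [Finset.card_image_of_injective _ toColex.injective, hcard𝒮]
  set 𝒮' : Finset (Colex (Finset (Fin n))) :=
    (Finset.powersetCard r (Finset.univ : Finset (Fin n))).image toColex with h𝒮'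
  set M := 𝒮'.card with hMdef
  have haM : a ≤ M := by omega
  let e := 𝒮'.orderIsoOfFin rfl
  have hmem𝒮 : ∀ i : Fin M, (ofColex ((e i : 𝒮') : Colex (Finset (Fin n)))).card = r := by
    intro i
    have h1 : ((e i : 𝒮') : Colex (Finset (Fin n))) ∈ 𝒮' := (e i).2
    obtain ⟨t, ht, hte⟩ := Finset.mem_image.1 h1
    rw [Finset.mem_powersetCard] at ht
    have : ofColex ((e i : 𝒮') : Colex (Finset (Fin n))) = t := by
      rw [← hte]; rfl
    rw [this]; exact ht.2
  have hkey : ∀ t : Finset (Fin n), t.card = r →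
      ∃ j : Fin M, ((e j : 𝒮') : Colex (Finset (Fin n))) = toColex t := by
    intro t htc
    have ht𝒮 : t ∈ Finset.powersetCard r (Finset.univ : Finset (Fin n)) := by
      rw [Finset.mem_powersetCard]; exact ⟨Finset.subset_univ _, htc⟩
    have h2 : toColex t ∈ 𝒮' := Finset.mem_image_of_mem _ ht𝒮
    exact ⟨e.symm ⟨_, h2⟩, by simp⟩
  refine ⟨(Finset.univ.filter fun i : Fin M => (i : ℕ) < a).image
      (fun i => ofColex ((e i : 𝒮') : Colex (Finset (Fin n)))), ⟨?_, ?_⟩, ?_⟩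
  · -- sized
    intro t ht
    simp only [Finset.coe_image, Set.mem_image] at ht
    obtain ⟨i, _, rfl⟩ := ht
    exact hmem𝒮 i
  · -- initial segment property
    rintro s t hs ⟨hlt, hcard⟩
    rw [Finset.mem_image] at hs ⊢
    obtain ⟨i, hi, rfl⟩ := hs
    rw [Finset.mem_filter] at hi
    obtain ⟨j, hjt⟩ := hkey t hcard
    have hofj : ofColex ((e j : 𝒮') : Colex (Finset (Fin n))) = t := by
      rw [hjt]; rfl
    refine ⟨j, Finset.mem_filter.2 ⟨Finset.mem_univ _, ?_⟩, hofj⟩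
    have hji : j < i := by
      rw [← e.lt_iff_lt]
      have h3 : ((e j : 𝒮') : Colex (Finset (Fin n))) < ((e i : 𝒮') : Colex (Finset (Fin n))) := by
        rw [hjt]
        have : toColex (ofColex ((e i : 𝒮') : Colex (Finset (Fin n))))
            = ((e i : 𝒮') : Colex (Finset (Fin n))) := rfl
        rw [← this]
        exact hlt
      exact h3
    have : (j : ℕ) < (i : ℕ) := hji
    omega
  · -- card
    rw [Finset.card_image_of_injOn]
    · have himg : Finset.image Fin.val (Finset.univ.filter fun i : Fin M => (i : ℕ) < a)
          = Finset.range a := by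
        ext j
        simp only [Finset.mem_image, Finset.mem_filter, Finset.mem_univ, true_and,
          Finset.mem_range]
        constructor
        · rintro ⟨i, hi, rfl⟩; exact hi
        · intro hj; exact ⟨⟨j, lt_of_lt_of_le hj haM⟩, hj, rfl⟩
      have h2 := Finset.card_image_of_injective
        (Finset.univ.filter fun i : Fin M => (i : ℕ) < a) Fin.val_injective
      rw [himg, Finset.card_range] at h2
      omega
    · intro i _ j _ hij
      have h4 : ((e i : 𝒮') : Colex (Finset (Fin n))) = ((e j : 𝒮') : Colex (Finset (Fin n))) :=
        ofColex.injective hij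
      exact e.injective (Subtype.val_injective h4)

lemma isInitSeg_powAttach (n r j : ℕ) (h : ∀ m ∈ Finset.range j, m < n) :
    Finset.Colex.IsInitSeg (Finset.powersetCard r ((Finset.range j).attachFin h)) r := by
  constructor
  · exact Set.sized_powersetCard _ _
  · rintro s t hs ⟨hlt, hcard⟩
    rw [Finset.mem_powersetCard] at hs ⊢
    refine ⟨?_, hcard⟩
    intro x hx
    rw [Finset.mem_attachFin, Finset.mem_range]
    by_contra hxj
    have hxs : x ∉ s := by
      intro hxs
      have := hs.1 hxs
      rw [Finset.mem_attachFin, Finset.mem_range] at this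
      omega
    obtain ⟨hne, hall⟩ := Finset.Colex.toColex_lt_toColex.1 hlt
    obtain ⟨b, hbs, hbt, hxb⟩ := hall hx hxs
    have hbj := hs.1 hbs
    rw [Finset.mem_attachFin, Finset.mem_range] at hbj
    have hxb' : (x : ℕ) ≤ (b : ℕ) := hxb
    omega


lemma comb_bound (k d : ℕ) (hk : 2 ≤ k) (hd : d ≤ k - 2)
    (A : Finset (Finset (Fin (2*k-1)))) (hA : ∀ s ∈ A, s.card = k)
    (hA0 : Nat.choose (k+d) k ≤ A.card) (hA1 : A.card ≤ Nat.choose (k+d+1) k) :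
    (d+2) * Nat.choose (k+d) (k-1) + (k-1) * A.card
      ≤ (d+2) * (∂ A).card + (k-1) * Nat.choose (k+d) k := by
  classical
  set m := k + d with hm
  -- initial segment of the right size
  have haN : A.card ≤ Nat.choose (2*k-1) k :=
    hA1.trans (Nat.choose_le_choose k (by omega))
  obtain ⟨𝒞, h𝒞init, h𝒞card⟩ := exists_initSeg' (2*k-1) k A.card haN
  have hsh : ∀ (i1 i2 : DecidableEq (Fin (2*k-1))) (X : Finset (Finset (Fin (2*k-1)))),
      @Finset.shadow _ i1 X = @Finset.shadow _ i2 X :=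
    fun i1 i2 X => congrArg (fun i => @Finset.shadow _ i X) (Subsingleton.elim i1 i2)
  have hKK : (∂ 𝒞).card ≤ (∂ A).card := by
    have hKK0 := Finset.kruskal_katona (𝒜 := A) (𝒞 := 𝒞) (fun s hs => hA s hs)
      (le_of_eq h𝒞card) h𝒞init
    rwa [hsh _ (by infer_instance) 𝒞, hsh _ (by infer_instance) A] at hKK0
  -- ground sets
  have h0 : ∀ x ∈ Finset.range m, x < 2*k-1 := by intro x hx; rw [Finset.mem_range] at hx; omega
  have h1 : ∀ x ∈ Finset.range (m+1), x < 2*k-1 := by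
    intro x hx; rw [Finset.mem_range] at hx; omega
  set S0 : Finset (Fin (2*k-1)) := (Finset.range m).attachFin h0 with hS0
  set S1 : Finset (Fin (2*k-1)) := (Finset.range (m+1)).attachFin h1 with hS1
  have hS0card : S0.card = m := by rw [hS0, Finset.card_attachFin, Finset.card_range]
  have hS1card : S1.card = m+1 := by rw [hS1, Finset.card_attachFin, Finset.card_range]
  have hP0card : (Finset.powersetCard k S0).card = Nat.choose m k := by
    rw [Finset.card_powersetCard, hS0card]
  have hP1card : (Finset.powersetCard k S1).card = Nat.choose (m+1) k := by
    rw [Finset.card_powersetCard, hS1card]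
  -- inclusions
  have hinc1 : Finset.powersetCard k S0 ⊆ 𝒞 := by
    rcases (isInitSeg_powAttach (2*k-1) k m h0).total h𝒞init with h | h
    · exact h
    · have : 𝒞 = Finset.powersetCard k S0 :=
        Finset.eq_of_subset_of_card_le h (by omega)
      rw [this]
  have hinc2 : 𝒞 ⊆ Finset.powersetCard k S1 := by
    rcases h𝒞init.total (isInitSeg_powAttach (2*k-1) k (m+1) h1) with h | h
    · exact h
    · have : Finset.powersetCard k S1 = 𝒞 :=
        Finset.eq_of_subset_of_card_le h (by omega)
      rw [← this]
  -- the element m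
  set elm : Fin (2*k-1) := ⟨m, by omega⟩ with helm
  have hmemS1 : ∀ x : Fin (2*k-1), x ∈ S1 ↔ (x:ℕ) < m+1 := by
    intro x; rw [hS1, Finset.mem_attachFin, Finset.mem_range]
  have hmemS0 : ∀ x : Fin (2*k-1), x ∈ S0 ↔ (x:ℕ) < m := by
    intro x; rw [hS0, Finset.mem_attachFin, Finset.mem_range]
  set ℬ : Finset (Finset (Fin (2*k-1))) := 𝒞.filter (fun t => elm ∈ t) with hℬ
  have hsplit : 𝒞.filter (fun t => elm ∉ t) = Finset.powersetCard k S0 := by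
    ext t
    rw [Finset.mem_filter, Finset.mem_powersetCard]
    constructor
    · rintro ⟨ht, hnelm⟩
      have hsub1 := (Finset.mem_powersetCard.1 (hinc2 ht)).1
      refine ⟨?_, (Finset.mem_powersetCard.1 (hinc2 ht)).2⟩
      intro x hx
      rw [hmemS0]
      have := (hmemS1 x).1 (hsub1 hx)
      have hxm : (x:ℕ) ≠ m := by
        intro hxv
        apply hnelm
        have : x = elm := by rw [helm]; exact Fin.ext hxv
        rwa [← this]
      omega
    · rintro ⟨hsub0, hcard⟩
      refine ⟨hinc1 (Finset.mem_powersetCard.2 ⟨hsub0, hcard⟩), ?_⟩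
      intro helmt
      have := (hmemS0 elm).1 (hsub0 helmt)
      rw [helm] at this
      simp at this
  have hbcard : ℬ.card + Nat.choose m k = A.card := by
    have h2 := Finset.card_filter_add_card_filter_not (s := 𝒞) (p := fun t => elm ∈ t)
    have h3 : (𝒞.filter (fun t => ¬ elm ∈ t)).card = Nat.choose m k := by
      rw [← hP0card, ← hsplit]
    rw [h3, h𝒞card] at h2
    exact h2
  -- ℬ' : erase elm
  set ℬ' : Finset (Finset (Fin (2*k-1))) := ℬ.image (fun t => t.erase elm) with hℬ'
  have hℬmem : ∀ t ∈ ℬ, elm ∈ t ∧ t ∈ 𝒞 := by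
    intro t ht; rw [hℬ, Finset.mem_filter] at ht; exact ⟨ht.2, ht.1⟩
  have hℬ'card : ℬ'.card = ℬ.card := by
    rw [hℬ']
    apply Finset.card_image_of_injOn
    intro t ht t' ht' heq
    have heq' : t.erase elm = t'.erase elm := heq
    calc t = insert elm (t.erase elm) := (Finset.insert_erase (hℬmem t (Finset.mem_coe.1 ht)).1).symm
      _ = insert elm (t'.erase elm) := by rw [heq']
      _ = t' := Finset.insert_erase (hℬmem t' (Finset.mem_coe.1 ht')).1
  have h𝒞sized : ∀ t ∈ 𝒞, t.card = k := fun t ht => h𝒞init.1 ht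
  have hℬ'sub : ∀ w ∈ ℬ', w ⊆ S0 := by
    intro w hw
    rw [hℬ', Finset.mem_image] at hw
    obtain ⟨t, ht, rfl⟩ := hw
    intro x hx
    rw [Finset.mem_erase] at hx
    have hsub1 := (Finset.mem_powersetCard.1 (hinc2 (hℬmem t ht).2)).1
    have := (hmemS1 x).1 (hsub1 hx.2)
    rw [hmemS0]
    have hxm : (x:ℕ) ≠ m := by
      intro hxv
      exact hx.1 (by rw [helm]; exact Fin.ext hxv)
    omega
  have hℬ'sized : ∀ w ∈ ℬ', w.card = k - 1 := by
    intro w hw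
    rw [hℬ', Finset.mem_image] at hw
    obtain ⟨t, ht, rfl⟩ := hw
    rw [Finset.card_erase_of_mem (hℬmem t ht).1, h𝒞sized t (hℬmem t ht).2]
  -- shadow pieces
  have hpiece1 : Finset.powersetCard (k-1) S0 ⊆ ∂ 𝒞 := by
    intro w hw
    rw [Finset.mem_powersetCard] at hw
    obtain ⟨u, hwu, huS0, hucard⟩ :=
      Finset.exists_subsuperset_card_eq hw.1 (by omega : w.card ≤ k) (by omega : k ≤ S0.card)
    rw [Finset.mem_shadow_iff_exists_mem_card_add_one]
    exact ⟨u, hinc1 (Finset.mem_powersetCard.2 ⟨huS0, hucard⟩), hwu, by omega⟩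
  have hpiece2 : (∂ ℬ').image (fun w => insert elm w) ⊆ ∂ 𝒞 := by
    intro v hv
    rw [Finset.mem_image] at hv
    obtain ⟨w', hw', rfl⟩ := hv
    rw [Finset.mem_shadow_iff] at hw'
    obtain ⟨w, hw, x, hxw, rfl⟩ := hw'
    rw [hℬ', Finset.mem_image] at hw
    obtain ⟨t, ht, rfl⟩ := hw
    have helmt := (hℬmem t ht).1
    have hxelm : x ≠ elm := by
      intro h; rw [h] at hxw; exact (Finset.notMem_erase _ _) hxw
    have hins : insert elm ((t.erase elm).erase x) = t.erase x := by
      rw [Finset.erase_right_comm]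
      apply Finset.insert_erase
      rw [Finset.mem_erase]
      exact ⟨Ne.symm hxelm, helmt⟩
    rw [hins, Finset.mem_shadow_iff]
    exact ⟨t, (hℬmem t ht).2, x, Finset.mem_of_mem_erase hxw, rfl⟩
  have hdisj : Disjoint (Finset.powersetCard (k-1) S0) ((∂ ℬ').image (fun w => insert elm w)) := by
    rw [Finset.disjoint_left]
    intro v hv hv2
    rw [Finset.mem_powersetCard] at hv
    rw [Finset.mem_image] at hv2
    obtain ⟨w', _, rfl⟩ := hv2
    have : elm ∈ S0 := hv.1 (Finset.mem_insert_self _ _)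
    rw [hmemS0, helm] at this
    simp at this
  have hinj2 : ((∂ ℬ').image (fun w => insert elm w)).card = (∂ ℬ').card := by
    apply Finset.card_image_of_injOn
    intro w1 hw1 w2 hw2 heq
    have heq' : insert elm w1 = insert elm w2 := heq
    have helmnot : ∀ w' ∈ ∂ ℬ', elm ∉ w' := by
      intro w' hw'
      rw [Finset.mem_shadow_iff] at hw'
      obtain ⟨w, hw, x, _, rfl⟩ := hw'
      intro hc
      have := hℬ'sub w hw (Finset.mem_of_mem_erase hc)
      rw [hmemS0, helm] at this
      simp at this
    rw [← Finset.erase_insert (helmnot w1 (Finset.mem_coe.1 hw1)), heq',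
      Finset.erase_insert (helmnot w2 (Finset.mem_coe.1 hw2))]
  have hshadow𝒞 : Nat.choose m (k-1) + (∂ ℬ').card ≤ (∂ 𝒞).card := by
    have hcup : Finset.powersetCard (k-1) S0 ∪ (∂ ℬ').image (fun w => insert elm w) ⊆ ∂ 𝒞 :=
      Finset.union_subset hpiece1 hpiece2
    have := Finset.card_le_card hcup
    rw [Finset.card_union_of_disjoint hdisj, hinj2, Finset.card_powersetCard, hS0card] at this
    exact this
  -- LYM on ℬ'
  have hlym : ℬ'.card * (k-1) ≤ (∂ ℬ').card * (d+2) := by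
    have := lym_ground (by omega : 1 ≤ k-1) hℬ'sub hℬ'sized
    have hrw : S0.card - (k-1) + 1 = d + 2 := by rw [hS0card]; omega
    rwa [hrw] at this
  -- assemble
  have hb' : (k-1) * A.card = (k-1) * ℬ.card + (k-1) * Nat.choose m k := by
    rw [← hbcard]; ring
  rw [hb']
  have step1 : (k-1) * ℬ.card ≤ (d+2) * (∂ ℬ').card := by
    calc (k-1) * ℬ.card = ℬ'.card * (k-1) := by rw [hℬ'card]; ring
      _ ≤ (∂ ℬ').card * (d+2) := hlym
      _ = (d+2) * (∂ ℬ').card := by ring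
  have step2 : (d+2) * Nat.choose m (k-1) + (d+2) * (∂ ℬ').card ≤ (d+2) * (∂ A).card := by
    calc (d+2) * Nat.choose m (k-1) + (d+2) * (∂ ℬ').card
        = (d+2) * (Nat.choose m (k-1) + (∂ ℬ').card) := by ring
      _ ≤ (d+2) * (∂ 𝒞).card := Nat.mul_le_mul_left _ hshadow𝒞
      _ ≤ (d+2) * (∂ A).card := Nat.mul_le_mul_left _ hKK
  calc (d+2) * Nat.choose m (k-1) + ((k-1) * ℬ.card + (k-1) * Nat.choose m k)
      ≤ (d+2) * Nat.choose m (k-1) + ((d+2) * (∂ ℬ').card + (k-1) * Nat.choose m k) := by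
        exact Nat.add_le_add_left (Nat.add_le_add_right step1 _) _
    _ = ((d+2) * Nat.choose m (k-1) + (d+2) * (∂ ℬ').card) + (k-1) * Nat.choose m k := by ring
    _ ≤ (d+2) * (∂ A).card + (k-1) * Nat.choose m k := Nat.add_le_add_right step2 _


lemma analytic_core (K d : ℕ) (A0 A1 B0 B1 N a X : ℝ)
    (c1 : A0 * ((K:ℝ)+2) = B0 * ((d:ℝ)+1))
    (c2 : A1 * ((K:ℝ)+2) = B1 * ((d:ℝ)+2))
    (c3 : A1 = A0 + B0)
    (c4 : N * ((d:ℝ)+2)^(K+2) ≤ A1 * ((K:ℝ)+2)^(K+2))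
    (hA0R : 1 ≤ A0) (hB0R : 1 ≤ B0) (hA1R : 1 ≤ A1) (hB1R : 1 ≤ B1) (hNR : 1 ≤ N)
    (ha0 : A0 ≤ a) (ha1 : a ≤ A1)
    (hX : ((d:ℝ)+2) * B0 + ((K:ℝ)+1) * a ≤ ((d:ℝ)+2) * X + ((K:ℝ)+1) * A0) :
    (a / ((K:ℝ)+2)) * Real.log (N / a) ≤ X - a := by
  have hapos : (0:ℝ) < a := lt_of_lt_of_le (by linarith) ha0
  have hd2 : (0:ℝ) < (d:ℝ)+2 := by positivity
  set s : ℝ := ((K:ℝ)+1)/((d:ℝ)+2) with hs_def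
  have hs : s * ((d:ℝ)+2) = (K:ℝ)+1 := by rw [hs_def]; field_simp
  have hs_nonneg : 0 ≤ s := by rw [hs_def]; positivity
  have i5 : ((d:ℝ)+2)*B0 = A1 + ((K:ℝ)+1)*A0 := by linear_combination - c1 - c3
  -- the linear lower bound L a  (written out each time)
  have hLa_le_X : B0 + s*(a - A0) ≤ X := by
    have h1 : ((d:ℝ)+2) * (B0 + s*(a - A0)) = ((d:ℝ)+2)*B0 + ((K:ℝ)+1)*(a - A0) := by
      linear_combination (a - A0) * hs
    nlinarith [hX, h1]
  have hLpos : ∀ x : ℝ, A0 ≤ x → 0 < B0 + s*(x - A0) := by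
    intro x hx
    nlinarith [mul_nonneg hs_nonneg (sub_nonneg.2 hx)]
  have hB1L : B0 + s*(A1 - A0) = B1 := by
    have h2 : ((d:ℝ)+2) * (B0 + s*(A1 - A0)) = ((d:ℝ)+2) * B1 := by
      linear_combination (A1 - A0)*hs + i5 + c2
    exact mul_left_cancel₀ (ne_of_gt hd2) h2
  have hconc : ∀ x : ℝ, x ≤ A1 → ((K:ℝ)+2)*s*x ≤ ((K:ℝ)+1)*(B0 + s*(x - A0)) := by
    intro x hx
    have id1 : ((K:ℝ)+1) * (B0 + s*(x - A0)) - ((K:ℝ)+2)*s*x = s*(A1 - x) := by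
      linear_combination s * i5 - B0 * hs
    linarith [id1, mul_nonneg hs_nonneg (sub_nonneg.2 hx)]
  -- the function f
  have hderiv : ∀ x ∈ interior (Set.Icc A0 A1),
      HasDerivAt (fun x => ((K:ℝ)+2) * Real.log (B0 + s*(x - A0)) - ((K:ℝ)+1) * Real.log x)
        (((K:ℝ)+2) * (s / (B0 + s*(x - A0))) - ((K:ℝ)+1) * x⁻¹) x := by
    intro x hx
    rw [interior_Icc] at hx
    have hx0 : 0 < x := lt_of_le_of_lt (by linarith : (0:ℝ) ≤ A0) hx.1
    have hLd : HasDerivAt (fun y : ℝ => B0 + s*(y - A0)) s x := by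
      have h1 : HasDerivAt (fun y : ℝ => y - A0) 1 x := (hasDerivAt_id x).sub_const _
      have h2 : HasDerivAt (fun y : ℝ => s * (y - A0)) (s * 1) x := h1.const_mul s
      have h3 := h2.const_add B0
      simpa using h3
    have hlog1 : HasDerivAt (fun y => Real.log (B0 + s*(y - A0))) (s / (B0 + s*(x - A0))) x :=
      hLd.log (ne_of_gt (hLpos x (le_of_lt hx.1)))
    have hlog2 : HasDerivAt Real.log x⁻¹ x := Real.hasDerivAt_log (ne_of_gt hx0)
    exact (hlog1.const_mul _).sub (hlog2.const_mul _)
  have hant : AntitoneOn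
      (fun x => ((K:ℝ)+2) * Real.log (B0 + s*(x - A0)) - ((K:ℝ)+1) * Real.log x)
      (Set.Icc A0 A1) := by
    apply antitoneOn_of_deriv_nonpos (convex_Icc _ _)
    · apply ContinuousOn.sub
      · apply ContinuousOn.mul continuousOn_const
        apply ContinuousOn.log
        · exact continuousOn_const.add (continuousOn_const.mul
            (continuousOn_id.sub continuousOn_const))
        · exact fun x hx => ne_of_gt (hLpos x hx.1)
      · apply ContinuousOn.mul continuousOn_const
        apply ContinuousOn.mono Real.continuousOn_log
        intro x hx
        simp only [Set.mem_compl_iff, Set.mem_singleton_iff]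
        have h1 : (1:ℝ) ≤ x := le_trans hA0R hx.1
        intro h; rw [h] at h1; linarith
    · intro x hx
      exact (hderiv x hx).differentiableAt.differentiableWithinAt
    · intro x hx
      rw [(hderiv x hx).deriv]
      rw [interior_Icc] at hx
      have hx0 : 0 < x := lt_of_le_of_lt (by linarith : (0:ℝ) ≤ A0) hx.1
      have hLx : 0 < B0 + s*(x - A0) := hLpos x (le_of_lt hx.1)
      have hc := hconc x (le_of_lt hx.2)
      rw [sub_nonpos]
      have e1 : ((K:ℝ)+2) * (s / (B0 + s*(x - A0))) = (((K:ℝ)+2)*s) / (B0 + s*(x - A0)) := by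
        ring
      have e2 : ((K:ℝ)+1) * x⁻¹ = ((K:ℝ)+1) / x := by
        rw [div_eq_mul_inv]
      rw [e1, e2, div_le_div_iff₀ hLx hx0]
      calc ((K:ℝ)+2)*s*x ≤ ((K:ℝ)+1)*(B0 + s*(x - A0)) := hc
        _ = ((K:ℝ)+1)*(B0 + s*(x - A0)) := rfl
  have hfa : ((K:ℝ)+2) * Real.log (B0 + s*(A1 - A0)) - ((K:ℝ)+1) * Real.log A1
      ≤ ((K:ℝ)+2) * Real.log (B0 + s*(a - A0)) - ((K:ℝ)+1) * Real.log a :=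
    hant (Set.mem_Icc.2 ⟨ha0, ha1⟩)
      (Set.mem_Icc.2 ⟨by linarith [hB0R, c3], le_refl A1⟩) ha1
  -- lower bound for f A1
  have hpowR : N * A1^(K+1) ≤ B1^(K+2) := by
    have h2 : N * ((d:ℝ)+2)^(K+2) * A1^(K+1) ≤ A1 * ((K:ℝ)+2)^(K+2) * A1^(K+1) :=
      mul_le_mul_of_nonneg_right c4 (by positivity)
    have h3 : A1 * ((K:ℝ)+2)^(K+2) * A1^(K+1) = ((K:ℝ)+2)^(K+2) * A1^(K+2) := by ring
    have h4 : ((K:ℝ)+2)^(K+2) * A1^(K+2) = ((d:ℝ)+2)^(K+2) * B1^(K+2) := by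
      rw [← mul_pow, ← mul_pow]
      congr 1
      linarith [c2]
    have h6 : ((d:ℝ)+2)^(K+2) * (N * A1^(K+1)) ≤ ((d:ℝ)+2)^(K+2) * B1^(K+2) := by
      calc ((d:ℝ)+2)^(K+2) * (N * A1^(K+1)) = N * ((d:ℝ)+2)^(K+2) * A1^(K+1) := by ring
        _ ≤ A1 * ((K:ℝ)+2)^(K+2) * A1^(K+1) := h2
        _ = ((K:ℝ)+2)^(K+2) * A1^(K+2) := h3
        _ = ((d:ℝ)+2)^(K+2) * B1^(K+2) := h4
    exact le_of_mul_le_mul_left h6 (by positivity)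
  have hlogN : Real.log N + ((K:ℝ)+1) * Real.log A1 ≤ ((K:ℝ)+2) * Real.log B1 := by
    have h1 : Real.log (N * A1^(K+1)) ≤ Real.log (B1^(K+2)) :=
      Real.log_le_log (by positivity) hpowR
    rw [Real.log_mul (by positivity) (by positivity), Real.log_pow, Real.log_pow] at h1
    push_cast at h1
    linarith
  have hfA1 : Real.log N ≤ ((K:ℝ)+2) * Real.log (B0 + s*(A1 - A0)) - ((K:ℝ)+1) * Real.log A1 := by
    rw [hB1L]
    linarith
  -- conclude
  have hkey : Real.log N ≤ ((K:ℝ)+2) * Real.log (B0 + s*(a - A0)) - ((K:ℝ)+1) * Real.log a := by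
    linarith [hfa, hfA1]
  have hLa_pos : 0 < B0 + s*(a - A0) := hLpos a ha0
  have hstep : Real.log (N/a) ≤ ((K:ℝ)+2) * ((B0 + s*(a - A0)) / a - 1) := by
    rw [Real.log_div (by positivity) (ne_of_gt hapos)]
    have h1 : Real.log N - Real.log a
        ≤ ((K:ℝ)+2) * (Real.log (B0 + s*(a - A0)) - Real.log a) := by linarith [hkey]
    have h2 : Real.log (B0 + s*(a - A0)) - Real.log a = Real.log ((B0 + s*(a - A0)) / a) := by
      rw [Real.log_div (ne_of_gt hLa_pos) (ne_of_gt hapos)]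
    have h3 : Real.log ((B0 + s*(a - A0)) / a) ≤ (B0 + s*(a - A0)) / a - 1 :=
      Real.log_le_sub_one_of_pos (by positivity)
    calc Real.log N - Real.log a ≤ ((K:ℝ)+2) * (Real.log (B0 + s*(a - A0)) - Real.log a) := h1
      _ = ((K:ℝ)+2) * Real.log ((B0 + s*(a - A0)) / a) := by rw [h2]
      _ ≤ ((K:ℝ)+2) * ((B0 + s*(a - A0)) / a - 1) := by
          apply mul_le_mul_of_nonneg_left h3 (by positivity)
  have hfinal : (a / ((K:ℝ)+2)) * Real.log (N/a) ≤ (B0 + s*(a - A0)) - a := by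
    have h1 : (a / ((K:ℝ)+2)) * Real.log (N/a)
        ≤ (a / ((K:ℝ)+2)) * (((K:ℝ)+2) * ((B0 + s*(a - A0)) / a - 1)) :=
      mul_le_mul_of_nonneg_left hstep (by positivity)
    have h2 : (a / ((K:ℝ)+2)) * (((K:ℝ)+2) * ((B0 + s*(a - A0)) / a - 1))
        = (B0 + s*(a - A0)) - a := by
      field_simp
    linarith
  calc (a / ((K:ℝ)+2)) * Real.log (N/a) ≤ (B0 + s*(a - A0)) - a := hfinal
    _ ≤ X - a := by linarith [hLa_le_X]

lemma analytic_bound_aux (K d : ℕ) (hd : d ≤ K) (a X : ℝ)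
    (ha0 : (Nat.choose (K+2+d) (K+2) : ℝ) ≤ a)
    (ha1 : a ≤ (Nat.choose (K+2+d+1) (K+2) : ℝ))
    (hX : ((d:ℝ)+2) * (Nat.choose (K+2+d) (K+1) : ℝ) + ((K:ℝ)+1) * a
          ≤ ((d:ℝ)+2) * X + ((K:ℝ)+1) * (Nat.choose (K+2+d) (K+2) : ℝ)) :
    (a / ((K:ℝ)+2)) * Real.log ((Nat.choose (2*K+3) (K+2) : ℝ) / a) ≤ X - a := by
  have nat1 : Nat.choose (K+2+d) (K+2) * (K+2) = Nat.choose (K+2+d) (K+1) * (d+1) := by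
    have h := Nat.choose_succ_right_eq (K+2+d) (K+1)
    have e2 : K + 2 + d - (K+1) = d + 1 := by omega
    rw [e2] at h; exact h
  have nat2 : Nat.choose (K+2+d+1) (K+2) * (K+2) = Nat.choose (K+2+d+1) (K+1) * (d+2) := by
    have h := Nat.choose_succ_right_eq (K+2+d+1) (K+1)
    have e2 : K + 2 + d + 1 - (K+1) = d + 2 := by omega
    rw [e2] at h; exact h
  have nat3 : Nat.choose (K+2+d+1) (K+2) = Nat.choose (K+2+d) (K+2) + Nat.choose (K+2+d) (K+1) := by
    have h : Nat.choose (K+2+d+1) (K+2)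
        = Nat.choose (K+2+d) (K+1) + Nat.choose (K+2+d) (K+2) :=
      Nat.choose_succ_succ (K+2+d) (K+1)
    omega
  have nat4 : Nat.choose (2*K+3) (K+2) * (d+2)^(K+2) ≤ Nat.choose (K+2+d+1) (K+2) * (K+2)^(K+2) := by
    have h := choose_pow_bound (K+2) (by omega) (K-d) (by omega)
    have e1 : K + 2 - (K-d) = d + 2 := by omega
    have e2 : 2*(K+2)-1-(K-d) = K+2+d+1 := by omega
    have e3 : 2*(K+2)-1 = 2*K+3 := by omega
    rw [e1, e2, e3] at h; exact h
  refine analytic_core K d ((Nat.choose (K+2+d) (K+2) : ℕ) : ℝ) ((Nat.choose (K+2+d+1) (K+2) : ℕ) : ℝ)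
    ((Nat.choose (K+2+d) (K+1) : ℕ) : ℝ) ((Nat.choose (K+2+d+1) (K+1) : ℕ) : ℝ)
    ((Nat.choose (2*K+3) (K+2) : ℕ) : ℝ) a X ?_ ?_ ?_ ?_ ?_ ?_ ?_ ?_ ?_ ha0 ha1 hX
  · exact_mod_cast nat1
  · exact_mod_cast nat2
  · exact_mod_cast nat3
  · exact_mod_cast nat4
  · exact_mod_cast Nat.choose_pos (by omega : K+2 ≤ K+2+d)
  · exact_mod_cast Nat.choose_pos (by omega : K+1 ≤ K+2+d)
  · exact_mod_cast Nat.choose_pos (by omega : K+2 ≤ K+2+d+1)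
  · exact_mod_cast Nat.choose_pos (by omega : K+1 ≤ K+2+d+1)
  · exact_mod_cast Nat.choose_pos (by omega : K+2 ≤ 2*K+3)

lemma nbrLow_eq_shadow (k : ℕ) (hk : 1 ≤ k) (A : Finset (Finset (Fin (2 * k - 1))))
    (hA : A ⊆ Lk k) : nbrLow k A = ∂ A := by
  have hsized : ∀ s ∈ A, s.card = k := by
    intro s hs
    exact (Finset.mem_powersetCard.1 (hA hs)).2
  ext w
  rw [nbrLow, Finset.mem_filter, Finset.mem_shadow_iff_exists_mem_card_add_one, Lk1,
    Finset.mem_powersetCard]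
  constructor
  · rintro ⟨⟨-, hwcard⟩, u, hu, hwu⟩
    exact ⟨u, hu, hwu, by rw [hsized u hu, hwcard]; omega⟩
  · rintro ⟨u, hu, hwu, hcard⟩
    have := hsized u hu
    exact ⟨⟨Finset.subset_univ _, by omega⟩, u, hu, hwu⟩


/-- For `k ≥ 1` and nonempty `A ⊆ L_k` with `|A| = a`,
`|N(A)| − |A| ≥ (a/k)·ln(C(2k−1,k)/a)`. -/
theorem statement_4 (k : ℕ) (hk : 1 ≤ k) (A : Finset (Finset (Fin (2 * k - 1))))
    (hA : A ⊆ Lk k) (hne : A.Nonempty) :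
    ((A.card : ℝ) / k) * Real.log ((Nat.choose (2 * k - 1) k : ℝ) / A.card) ≤
      ((nbrLow k A).card : ℝ) - A.card := by
  have hsized : ∀ s ∈ A, s.card = k := fun s hs => (Finset.mem_powersetCard.1 (hA hs)).2
  have hApos : 1 ≤ A.card := Finset.card_pos.2 hne
  have hLkcard : (Lk k).card = Nat.choose (2*k-1) k := by
    rw [Lk, Finset.card_powersetCard, Finset.card_univ, Fintype.card_fin]
  have haN : A.card ≤ Nat.choose (2*k-1) k := by
    rw [← hLkcard]; exact Finset.card_le_card hA
  rw [nbrLow_eq_shadow k hk A hA]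
  rcases Nat.lt_or_ge k 2 with hk1 | hk2
  · -- k = 1
    have hk1' : k = 1 := by omega
    subst hk1'
    have hN1 : Nat.choose (2*1-1) 1 = 1 := by norm_num
    have hA1 : A.card = 1 := by omega
    have hsh : ∅ ∈ ∂ A := by
      obtain ⟨u, hu⟩ := hne
      rw [Finset.mem_shadow_iff_exists_mem_card_add_one]
      refine ⟨u, hu, Finset.empty_subset _, ?_⟩
      rw [hsized u hu]
      simp
    have hcard1 : 1 ≤ (∂ A).card := Finset.card_pos.2 ⟨∅, hsh⟩
    have h9 : (1:ℝ) ≤ ((∂ A).card : ℝ) := by exact_mod_cast hcard1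
    rw [hA1, hN1]
    norm_num [Real.log_one]
    first
    | exact ⟨∅, hsh⟩
    | linarith
  · -- k ≥ 2
    obtain ⟨K, rfl⟩ : ∃ K, k = K + 2 := ⟨k - 2, by omega⟩
    set P : ℕ → Prop := fun j => Nat.choose (K+2+j) (K+2) ≤ A.card with hP
    have hP0 : P 0 := by
      rw [hP]
      simp only [Nat.add_zero, Nat.choose_self]
      omega
    set d := Nat.findGreatest P K with hd_def
    have hd : d ≤ K := Nat.findGreatest_le K
    have hDP : P d := Nat.findGreatest_spec (Nat.zero_le K) hP0
    have ha0 : Nat.choose (K+2+d) (K+2) ≤ A.card := hDP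
    have ha1 : A.card ≤ Nat.choose (K+2+d+1) (K+2) := by
      rcases Nat.lt_or_ge d K with hdK | hdK
      · have hng := Nat.findGreatest_is_greatest (by omega : d < d+1) (by omega : d+1 ≤ K)
        rw [hP] at hng
        have : ¬ (Nat.choose (K+2+(d+1)) (K+2) ≤ A.card) := hng
        have e : K+2+(d+1) = K+2+d+1 := by omega
        rw [e] at this
        omega
      · have hdK' : d = K := by omega
        have e : K+2+d+1 = 2*(K+2)-1 := by omega
        rw [e]
        exact haN
    have comb := comb_bound (K+2) d (by omega) (by omega) A hsized ha0 ha1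
    have e1 : K+2-1 = K+1 := rfl
    rw [e1] at comb
    have hXr : ((d:ℝ)+2) * (Nat.choose (K+2+d) (K+1) : ℝ) + ((K:ℝ)+1) * (A.card : ℝ)
          ≤ ((d:ℝ)+2) * ((∂ A).card : ℝ) + ((K:ℝ)+1) * (Nat.choose (K+2+d) (K+2) : ℝ) := by
      exact_mod_cast comb
    have hres := analytic_bound_aux K d hd (A.card : ℝ) ((∂ A).card : ℝ)
      (by exact_mod_cast ha0) (by exact_mod_cast ha1) hXr
    have e2 : 2*(K+2)-1 = 2*K+3 := by omega
    have e4 : Nat.choose (2*(K+2)-1) (K+2) = Nat.choose (2*K+3) (K+2) := by rw [e2]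
    have e3 : ((K+2 : ℕ):ℝ) = (K:ℝ)+2 := by push_cast; ring
    rw [e4, e3]
    exact hres

end Statement4Helpers
end

section
/- Let G be a finite simple graph with maximum degree at most d and let v be a vertex of G. Then for every a ≥ 1, the number of subgraphs of G that are trees containing v and having exactly a vertices is at most (e·d)^{a−1}. -/
open Finset SimpleGraph
open scoped Classical
set_option linter.unusedSectionVars false

noncomputable section

namespace Stmt8

variable {V : Type*} [Fintype V] [LinearOrder V] {G : SimpleGraph V}

/-- Distance from `v` in the subgraph `H`, with sentinel `H.verts.ncard` when undefined. -/
def DV (H : G.Subgraph) (v x : V) : ℕ :=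
  if h : v ∈ H.verts ∧ x ∈ H.verts then H.coe.dist ⟨v, h.1⟩ ⟨x, h.2⟩ else H.verts.ncard

/-- Parent of `x` in `H` viewed as a BFS tree from `v`. -/
def PV (H : G.Subgraph) (v x : V) : V :=
  if h : ∃ w, H.Adj w x ∧ DV H v w + 1 = DV H v x then h.choose else x

variable {H : G.Subgraph} {v x y w : V}

lemma DV_of_mem (hv : v ∈ H.verts) (hx : x ∈ H.verts) :
    DV H v x = H.coe.dist ⟨v, hv⟩ ⟨x, hx⟩ := dif_pos ⟨hv, hx⟩

lemma DV_of_not_mem (hx : x ∉ H.verts) : DV H v x = H.verts.ncard :=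
  dif_neg (fun h => hx h.2)

lemma DV_self (hv : v ∈ H.verts) : DV H v v = 0 := by
  rw [DV_of_mem hv hv, dist_self]

lemma DV_lt_ncard (hv : v ∈ H.verts) (ht : H.coe.IsTree) (hx : x ∈ H.verts) :
    DV H v x < H.verts.ncard := by
  rw [DV_of_mem hv hx]
  obtain ⟨p, hp, hl⟩ := ht.isConnected.exists_path_of_dist ⟨v, hv⟩ ⟨x, hx⟩
  rw [← hl, Set.ncard_eq_toFinset_card', Set.toFinset_card]
  exact hp.length_lt

lemma mem_iff_DV_lt (hv : v ∈ H.verts) (ht : H.coe.IsTree) :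
    x ∈ H.verts ↔ DV H v x < H.verts.ncard := by
  refine ⟨fun hx => DV_lt_ncard hv ht hx, fun h => ?_⟩
  by_contra hx
  rw [DV_of_not_mem hx] at h
  exact lt_irrefl _ h

lemma DV_le_ncard (hv : v ∈ H.verts) (ht : H.coe.IsTree) : DV H v x ≤ H.verts.ncard := by
  by_cases hx : x ∈ H.verts
  · exact (DV_lt_ncard hv ht hx).le
  · exact (DV_of_not_mem hx).le

lemma DV_eq_zero_iff (hv : v ∈ H.verts) (ht : H.coe.IsTree) (hx : x ∈ H.verts) :
    DV H v x = 0 ↔ x = v := by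
  rw [DV_of_mem hv hx, ht.isConnected.dist_eq_zero_iff]
  simp [Subtype.ext_iff, eq_comm]


lemma exists_parent (hv : v ∈ H.verts) (ht : H.coe.IsTree) (hx : x ∈ H.verts) (hxv : x ≠ v) :
    ∃ w, H.Adj w x ∧ DV H v w + 1 = DV H v x := by
  set r : H.verts := ⟨v, hv⟩
  set xx : H.verts := ⟨x, hx⟩
  have hne : xx ≠ r := by simp [r, xx, Subtype.ext_iff, hxv]
  obtain ⟨p, hp, hl⟩ := ht.isConnected.exists_path_of_dist r xx
  obtain ⟨w, hadj, q, hq⟩ := Walk.exists_eq_cons_of_ne hne p.reverse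
  have hql : q.length + 1 = H.coe.dist r xx := by
    have := congrArg Walk.length hq
    simpa [hl] using this.symm
  have h1 : H.coe.dist r w ≤ q.length := by
    simpa using dist_le q.reverse
  have h2 : H.coe.dist r xx ≤ H.coe.dist r w + 1 := by
    obtain ⟨s, _, hsl⟩ := ht.isConnected.exists_path_of_dist r w
    have := dist_le (s.concat hadj.symm)
    simpa [Walk.length_concat, hsl] using this
  have hdq : H.coe.dist r w + 1 = H.coe.dist r xx := by omega
  refine ⟨↑w, ?_, ?_⟩
  · have : H.Adj x ↑w := hadj
    exact this.symm
  · rw [DV_of_mem hv w.2, DV_of_mem hv hx]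
    simpa using hdq

/-- In a tree, a path-to-root construction: helper building a path from `x` up to the root. -/
lemma aux_path (hv : v ∈ H.verts) (ht : H.coe.IsTree) {ww xx : H.verts}
    (hadj : H.coe.Adj xx ww)
    (hdw : H.coe.dist ⟨v, hv⟩ ww + 1 = H.coe.dist ⟨v, hv⟩ xx) :
    ∃ (p : H.coe.Walk xx (⟨v, hv⟩ : H.verts)), p.IsPath ∧
      p.support = xx :: ww :: p.support.tail.tail := by
  set r : H.verts := ⟨v, hv⟩
  obtain ⟨q, hq, hql⟩ := ht.isConnected.exists_path_of_dist r ww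
  have hxq : xx ∉ q.support := by
    intro hmem
    have h1 := dist_le (q.takeUntil xx hmem)
    have h2 := Walk.length_takeUntil_le q hmem
    omega
  have hxqr : xx ∉ q.reverse.support := by
    rwa [Walk.support_reverse, List.mem_reverse]
  refine ⟨Walk.cons hadj q.reverse, ?_, ?_⟩
  · exact ((q.isPath_reverse_iff).2 hq).cons hxqr
  · rw [Walk.support_cons, q.reverse.support_eq_cons]
    simp

lemma parent_unique (hv : v ∈ H.verts) (ht : H.coe.IsTree) (hx : x ∈ H.verts)
    (h1 : H.Adj w x) (hd1 : DV H v w + 1 = DV H v x)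
    (h2 : H.Adj u x) (hd2 : DV H v u + 1 = DV H v x) : w = u := by
  have hw : w ∈ H.verts := H.edge_vert h1
  have hu : u ∈ H.verts := H.edge_vert h2
  rw [DV_of_mem hv hw, DV_of_mem hv hx] at hd1
  rw [DV_of_mem hv hu, DV_of_mem hv hx] at hd2
  obtain ⟨p1, hp1, hs1⟩ := aux_path hv ht (ww := ⟨w, hw⟩) (xx := ⟨x, hx⟩) (h1.symm).coe hd1
  obtain ⟨p2, hp2, hs2⟩ := aux_path hv ht (ww := ⟨u, hu⟩) (xx := ⟨x, hx⟩) (h2.symm).coe hd2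
  have := (ht.existsUnique_path ⟨x, hx⟩ ⟨v, hv⟩).unique hp1 hp2
  rw [this, hs2] at hs1
  have := (List.cons.injEq _ _ _ _).mp hs1
  exact (congrArg Subtype.val (List.head_eq_of_cons_eq this.2)).symm

lemma PV_spec (hv : v ∈ H.verts) (ht : H.coe.IsTree) (hx : x ∈ H.verts) (hxv : x ≠ v) :
    H.Adj (PV H v x) x ∧ DV H v (PV H v x) + 1 = DV H v x := by
  rw [PV, dif_pos (exists_parent hv ht hx hxv)]
  exact (exists_parent hv ht hx hxv).choose_spec

lemma PV_eq_of (hv : v ∈ H.verts) (ht : H.coe.IsTree)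
    (h : H.Adj w x) (hd : DV H v w + 1 = DV H v x) : PV H v x = w := by
  have hx : x ∈ H.verts := H.edge_vert h.symm
  have hxv : x ≠ v := by
    rintro rfl
    rw [DV_self hv] at hd
    omega
  obtain ⟨h1, h2⟩ := PV_spec hv ht hx hxv
  exact parent_unique hv ht hx h1 h2 h hd

lemma PV_self : PV H v v = v := by
  rw [PV, dif_neg]
  rintro ⟨w, hw, hd⟩
  by_cases hvm : v ∈ H.verts
  · rw [DV_self hvm] at hd; omega
  · rw [DV_of_not_mem hvm] at hd
    have hwv : w ∈ H.verts := H.edge_vert hw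
    by_cases hvv : v ∈ H.verts
    · exact hvm hvv
    · have : DV H v w = H.verts.ncard := dif_neg (fun hh => hvv hh.1)
      omega

lemma PV_of_not_mem (hx : x ∉ H.verts) : PV H v x = x := by
  rw [PV, dif_neg]
  rintro ⟨w, hw, -⟩
  exact hx (H.edge_vert hw.symm)

/-- BFS rank of a vertex: number of vertices lexicographically before it
(by distance, then label). -/
def rank (H : G.Subgraph) (v x : V) : ℕ :=
  (Finset.univ.filter (fun w => DV H v w < DV H v x ∨ (DV H v w = DV H v x ∧ w < x))).card

lemma rank_lt_rank (h : DV H v x < DV H v y ∨ (DV H v x = DV H v y ∧ x < y)) :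
    rank H v x < rank H v y := by
  apply Finset.card_lt_card
  rw [Finset.ssubset_iff_of_subset]
  · exact ⟨x, by simpa using h, by simp⟩
  · intro w hw
    simp only [Finset.mem_filter, Finset.mem_univ, true_and] at hw ⊢
    rcases hw with hw | ⟨hw1, hw2⟩ <;> rcases h with h | ⟨h1, h2⟩
    · omega
    · omega
    · omega
    · exact Or.inr ⟨by omega, hw2.trans h2⟩

lemma rank_injective : Function.Injective (rank H v) := by
  intro x y hxy
  by_contra hne
  rcases lt_trichotomy (DV H v x) (DV H v y) with h | h | h
  · exact absurd hxy (rank_lt_rank (Or.inl h)).ne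
  · rcases lt_trichotomy x y with h2 | h2 | h2
    · exact absurd hxy (rank_lt_rank (Or.inr ⟨h, h2⟩)).ne
    · exact hne h2
    · exact absurd hxy.symm (rank_lt_rank (Or.inr ⟨h.symm, h2⟩)).ne
  · exact absurd hxy.symm (rank_lt_rank (Or.inl h)).ne

lemma rank_lt_ncard (hv : v ∈ H.verts) (ht : H.coe.IsTree) (hx : x ∈ H.verts) :
    rank H v x < H.verts.ncard := by
  rw [Set.ncard_eq_toFinset_card']
  apply Finset.card_lt_card
  rw [Finset.ssubset_iff_of_subset]
  · exact ⟨x, by simpa using hx, by simp⟩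
  · intro w hw
    simp only [Finset.mem_filter, Finset.mem_univ, true_and] at hw
    have hlt : DV H v w < H.verts.ncard := by
      have := DV_lt_ncard hv ht hx
      rcases hw with hw | ⟨hw, -⟩ <;> omega
    rw [Set.mem_toFinset]
    exact (mem_iff_DV_lt hv ht).2 hlt

lemma rank_congr {H' : G.Subgraph} {k : ℕ}
    (hk : ∀ w, DV H v w ≤ k ∨ DV H' v w ≤ k → DV H v w = DV H' v w)
    (hx : DV H v x = k) (hx' : DV H' v x = k) : rank H v x = rank H' v x := by
  unfold rank
  congr 1
  apply Finset.filter_congr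
  intro w _
  rw [hx, hx']
  constructor
  · intro hw
    have : DV H v w = DV H' v w := hk w (Or.inl (by omega))
    rw [← this]; exact hw
  · intro hw
    have : DV H v w = DV H' v w := hk w (Or.inr (by omega))
    rw [this]; exact hw

/-- Index of `x` in the sorted list of `G`-neighbors of `u`. -/
def idx (G : SimpleGraph V) [DecidableRel G.Adj] (u x : V) : ℕ :=
  List.idxOf x ((G.neighborFinset u).sort (· ≤ ·))

variable [DecidableRel G.Adj] {d : ℕ}

lemma mem_sort_of_adj {u : V} (h : G.Adj u x) :
    x ∈ (G.neighborFinset u).sort (· ≤ ·) := by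
  rw [Finset.mem_sort, mem_neighborFinset]
  exact h

lemma idx_lt (hd : ∀ u : V, G.degree u ≤ d) {u : V} (h : G.Adj u x) : idx G u x < d := by
  have h1 : idx G u x < ((G.neighborFinset u).sort (· ≤ ·)).length :=
    List.idxOf_lt_length_iff.2 (mem_sort_of_adj h)
  rw [Finset.length_sort] at h1
  exact h1.trans_le (hd u)

lemma idx_inj {u : V} (h : G.Adj u x) (h' : G.Adj u y) (he : idx G u x = idx G u y) : x = y :=
  (List.idxOf_inj (mem_sort_of_adj h)).1 he

/-- The code of a subgraph-tree: for each non-root vertex, the pair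
(rank of its parent, index of the vertex among its parent's neighbors). -/
def code (G : SimpleGraph V) [DecidableRel G.Adj] (H : G.Subgraph) (v : V) : Finset (ℕ × ℕ) :=
  (H.verts.toFinset.erase v).image (fun x => (rank H v (PV H v x), idx G (PV H v x) x))

lemma code_card (hv : v ∈ H.verts) (ht : H.coe.IsTree) :
    (code G H v).card = H.verts.ncard - 1 := by
  rw [code, Finset.card_image_of_injOn, Finset.card_erase_of_mem (Set.mem_toFinset.2 hv),
    Set.ncard_eq_toFinset_card']
  intro x hxm y hym he
  rw [Finset.mem_coe, Finset.mem_erase, Set.mem_toFinset] at hxm hym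
  obtain ⟨hax, hdx⟩ := PV_spec hv ht hxm.2 hxm.1
  obtain ⟨hay, hdy⟩ := PV_spec hv ht hym.2 hym.1
  have h1 : PV H v x = PV H v y := rank_injective (congrArg Prod.fst he)
  rw [h1] at hax
  exact idx_inj hax.adj_sub hay.adj_sub (by simpa [h1] using congrArg Prod.snd he)

lemma code_subset {a : ℕ} (hv : v ∈ H.verts) (ht : H.coe.IsTree)
    (hd : ∀ u : V, G.degree u ≤ d) (hcard : H.verts.ncard = a) :
    code G H v ⊆ Finset.range a ×ˢ Finset.range d := by
  intro p hp
  rw [code, Finset.mem_image] at hp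
  obtain ⟨x, hx, rfl⟩ := hp
  rw [Finset.mem_erase, Set.mem_toFinset] at hx
  obtain ⟨hax, -⟩ := PV_spec hv ht hx.2 hx.1
  rw [Finset.mem_product, Finset.mem_range, Finset.mem_range]
  exact ⟨hcard ▸ rank_lt_ncard hv ht (H.edge_vert hax), idx_lt hd hax.adj_sub⟩

lemma adj_to_parent (hv : v ∈ H.verts) (ht : H.coe.IsTree) (h : H.Adj x y) :
    (PV H v x = y ∧ x ≠ v) ∨ (PV H v y = x ∧ y ≠ v) := by
  classical
  have hx : x ∈ H.verts := H.edge_vert h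
  have hy : y ∈ H.verts := H.edge_vert h.symm
  -- the set of "parent edges"
  set F : Finset (Sym2 V) :=
    (H.verts.toFinset.erase v).image (fun z => s(PV H v z, z)) with hF
  -- the set of actual edges
  set E : Finset (Sym2 V) :=
    H.coe.edgeFinset.image (Sym2.map (Subtype.val : H.verts → V)) with hE
  have hFE : F ⊆ E := by
    intro e he
    rw [hF, Finset.mem_image] at he
    obtain ⟨z, hz, rfl⟩ := he
    rw [Finset.mem_erase, Set.mem_toFinset] at hz
    obtain ⟨haz, -⟩ := PV_spec hv ht hz.2 hz.1
    rw [hE, Finset.mem_image]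
    refine ⟨s(⟨PV H v z, H.edge_vert haz⟩, ⟨z, hz.2⟩), ?_, rfl⟩
    rw [SimpleGraph.mem_edgeFinset]
    exact haz.coe
  have hcardF : F.card = H.verts.ncard - 1 := by
    rw [hF, Finset.card_image_of_injOn, Finset.card_erase_of_mem (Set.mem_toFinset.2 hv),
      Set.ncard_eq_toFinset_card']
    intro z hzm w hwm he
    rw [Finset.mem_coe, Finset.mem_erase, Set.mem_toFinset] at hzm hwm
    rw [Sym2.eq_iff] at he
    rcases he with ⟨-, h2⟩ | ⟨h1, h2⟩
    · exact h2
    · obtain ⟨-, hdz⟩ := PV_spec hv ht hzm.2 hzm.1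
      obtain ⟨-, hdw⟩ := PV_spec hv ht hwm.2 hwm.1
      rw [h1] at hdz
      rw [← h2] at hdw
      exfalso; omega
  have hcardE : E.card = H.verts.ncard - 1 := by
    have hinj : Function.Injective (Sym2.map (Subtype.val : H.verts → V)) :=
      Sym2.map.injective Subtype.coe_injective
    rw [hE, Finset.card_image_of_injective _ hinj]
    have h1 := ht.card_edgeFinset
    have h2 : H.verts.ncard = Fintype.card H.verts := by
      rw [Set.ncard_eq_toFinset_card', Set.toFinset_card]
    omega
  have hFeqE : F = E := by
    apply Finset.eq_of_subset_of_card_le hFE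
    rw [hcardF, hcardE]
  have hmem : s(x, y) ∈ E := by
    rw [hE, Finset.mem_image]
    exact ⟨s(⟨x, hx⟩, ⟨y, hy⟩), Set.mem_toFinset.2 h.coe, rfl⟩
  rw [← hFeqE, hF, Finset.mem_image] at hmem
  obtain ⟨z, hz, he⟩ := hmem
  rw [Finset.mem_erase, Set.mem_toFinset] at hz
  rw [Sym2.eq_iff] at he
  rcases he with ⟨h1, h2⟩ | ⟨h1, h2⟩
  · subst h2; exact Or.inr ⟨h1, hz.1⟩
  · subst h2; exact Or.inl ⟨h1, hz.1⟩

lemma adj_iff (hv : v ∈ H.verts) (ht : H.coe.IsTree) :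
    H.Adj x y ↔ (x ∈ H.verts ∧ y ∈ H.verts ∧
      ((PV H v x = y ∧ x ≠ v) ∨ (PV H v y = x ∧ y ≠ v))) := by
  constructor
  · intro h
    exact ⟨H.edge_vert h, H.edge_vert h.symm, adj_to_parent hv ht h⟩
  · rintro ⟨hx, hy, ⟨h1, h2⟩ | ⟨h1, h2⟩⟩
    · exact h1 ▸ (PV_spec hv ht hx h2).1.symm
    · exact h1 ▸ (PV_spec hv ht hy h2).1

/-- The main BFS reconstruction step. -/
lemma step {H' : G.Subgraph} {a k : ℕ}
    (hv : v ∈ H.verts) (ht : H.coe.IsTree) (hcard : H.verts.ncard = a)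
    (hv' : v ∈ H'.verts) (ht' : H'.coe.IsTree) (hcard' : H'.verts.ncard = a)
    (hcode : code G H v = code G H' v)
    (IH : ∀ w, DV H v w ≤ k ∨ DV H' v w ≤ k →
      DV H v w = DV H' v w ∧ PV H v w = PV H' v w)
    (hx : DV H v x ≤ k + 1) :
    DV H v x = DV H' v x ∧ PV H v x = PV H' v x := by
  rcases Nat.lt_or_ge (DV H v x) (k + 1) with hlt | hge
  · exact IH x (Or.inl (by omega))
  have hxk : DV H v x = k + 1 := by omega
  by_cases hxm : x ∈ H.verts
  case neg =>
    -- x is not a vertex of H; show it is not one of H' either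
    have hxa : DV H v x = a := by rw [DV_of_not_mem hxm, hcard]
    have hxm' : x ∉ H'.verts := by
      intro hmem
      have h1 : DV H' v x < a := hcard' ▸ DV_lt_ncard hv' ht' hmem
      have h2 := (IH x (Or.inr (by omega))).1
      omega
    rw [DV_of_not_mem hxm, DV_of_not_mem hxm', hcard, hcard',
      PV_of_not_mem hxm, PV_of_not_mem hxm']
    exact ⟨rfl, rfl⟩
  -- x a vertex of H at distance exactly k+1
  have hxv : x ≠ v := by
    rintro rfl
    rw [DV_self hv] at hxk
    omega
  obtain ⟨hadj, hdp⟩ := PV_spec hv ht hxm hxv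
  set u := PV H v x with hu
  have hum : u ∈ H.verts := H.edge_vert hadj
  have hdu : DV H v u = k := by omega
  obtain ⟨hdu', -⟩ := IH u (Or.inl (by omega))
  have hum' : u ∈ H'.verts := by
    rw [mem_iff_DV_lt hv' ht', hcard', ← hdu', hdu]
    have := DV_lt_ncard hv ht hxm
    omega
  have hdu'' : DV H' v u = k := by omega
  have hrank : rank H v u = rank H' v u :=
    rank_congr (fun w hw => (IH w hw).1) hdu hdu''
  have hpair : (rank H v u, idx G u x) ∈ code G H v := by
    rw [code, Finset.mem_image]
    refine ⟨x, Finset.mem_erase.2 ⟨hxv, Set.mem_toFinset.2 hxm⟩, ?_⟩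
    rw [← hu]
  rw [hcode, code, Finset.mem_image] at hpair
  obtain ⟨y, hy, he⟩ := hpair
  rw [Finset.mem_erase, Set.mem_toFinset] at hy
  obtain ⟨hady, hdpy⟩ := PV_spec hv' ht' hy.2 hy.1
  have h1 : PV H' v y = u := rank_injective (hrank ▸ congrArg Prod.fst he)
  rw [h1] at hady hdpy
  have hidx : idx G u y = idx G u x := by
    have := congrArg Prod.snd he
    simpa [h1] using this
  have hyx : y = x := idx_inj hady.adj_sub hadj.adj_sub hidx
  subst hyx
  refine ⟨by omega, ?_⟩
  rw [h1, hu]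

lemma code_inj {H' : G.Subgraph} {a : ℕ} (ha : 1 ≤ a)
    (hv : v ∈ H.verts) (ht : H.coe.IsTree) (hcard : H.verts.ncard = a)
    (hv' : v ∈ H'.verts) (ht' : H'.coe.IsTree) (hcard' : H'.verts.ncard = a)
    (hcode : code G H v = code G H' v) : H = H' := by
  have base : ∀ (K : G.Subgraph), v ∈ K.verts → K.coe.IsTree → K.verts.ncard = a →
      ∀ w, DV K v w ≤ 0 → w = v := by
    intro K hvK htK hcK w hw
    have hwm : w ∈ K.verts := by
      by_contra hwm
      rw [DV_of_not_mem hwm, hcK] at hw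
      omega
    exact (DV_eq_zero_iff hvK htK hwm).1 (by omega)
  have Q : ∀ k w, DV H v w ≤ k ∨ DV H' v w ≤ k →
      DV H v w = DV H' v w ∧ PV H v w = PV H' v w := by
    intro k
    induction k with
    | zero =>
      intro w hw
      have hwv : w = v := by
        rcases hw with hw | hw
        · exact base H hv ht hcard w hw
        · exact base H' hv' ht' hcard' w hw
      subst hwv
      rw [DV_self hv, DV_self hv', PV_self, PV_self]
      exact ⟨rfl, rfl⟩
    | succ k ih =>
      intro w hw
      rcases hw with hw | hw
      · exact step hv ht hcard hv' ht' hcard' hcode ih hw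
      · have ih' : ∀ w, DV H' v w ≤ k ∨ DV H v w ≤ k →
            DV H' v w = DV H v w ∧ PV H' v w = PV H v w := by
          intro z hz
          obtain ⟨h1, h2⟩ := ih z (Or.symm hz)
          exact ⟨h1.symm, h2.symm⟩
        obtain ⟨h1, h2⟩ := step hv' ht' hcard' hv ht hcard hcode.symm ih' hw
        exact ⟨h1.symm, h2.symm⟩
  have hall : ∀ w, DV H v w = DV H' v w ∧ PV H v w = PV H' v w := by
    intro w
    exact Q a w (Or.inl (hcard ▸ DV_le_ncard hv ht))
  have hverts : H.verts = H'.verts := by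
    ext z
    rw [mem_iff_DV_lt hv ht, mem_iff_DV_lt hv' ht', hcard, hcard', (hall z).1]
  apply SimpleGraph.Subgraph.ext hverts
  ext z w
  rw [adj_iff hv ht, adj_iff hv' ht', hverts, (hall z).2, (hall w).2]

lemma succ_pow_le (m : ℕ) : ((m + 1 : ℝ)) ^ m ≤ Real.exp 1 ^ m * m.factorial := by
  induction m with
  | zero => simp
  | succ m ih =>
    have h1 : (m + 2 : ℝ) ≤ (m + 1) * Real.exp (1 / (m + 1)) := by
      have h2 : (1 / (m + 1 : ℝ)) + 1 ≤ Real.exp (1 / (m + 1)) := Real.add_one_le_exp _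
      have h3 : (0 : ℝ) < m + 1 := by positivity
      calc (m + 2 : ℝ) = (m + 1) * ((1 / (m + 1)) + 1) := by field_simp; ring
        _ ≤ (m + 1) * Real.exp (1 / (m + 1)) := by
            exact mul_le_mul_of_nonneg_left h2 h3.le
    have hexp : Real.exp (1 / (m + 1)) ^ (m + 1) = Real.exp 1 := by
      rw [← Real.exp_nat_mul]
      congr 1
      field_simp
      exact Nat.cast_succ m
    have h4 : ((m + 2 : ℝ)) ^ (m + 1) ≤ (m + 1) ^ (m + 1) * Real.exp 1 := by
      calc ((m + 2 : ℝ)) ^ (m + 1) ≤ ((m + 1) * Real.exp (1 / (m + 1))) ^ (m + 1) := by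
            apply pow_le_pow_left₀ (by positivity) h1
        _ = (m + 1) ^ (m + 1) * Real.exp 1 := by rw [mul_pow, hexp]
    calc ((↑(m + 1) + 1 : ℝ)) ^ (m + 1) = ((m + 2 : ℝ)) ^ (m + 1) := by push_cast; ring
      _ ≤ (m + 1) ^ (m + 1) * Real.exp 1 := h4
      _ = (m + 1) * Real.exp 1 * (m + 1) ^ m := by ring
      _ ≤ (m + 1) * Real.exp 1 * (Real.exp 1 ^ m * m.factorial) := by
          apply mul_le_mul_of_nonneg_left ih
          positivity
      _ = Real.exp 1 ^ (m + 1) * (m + 1).factorial := by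
          rw [Nat.factorial_succ]
          push_cast
          ring

lemma choose_bound (a d : ℕ) (ha : 1 ≤ a) :
    (((a * d).choose (a - 1) : ℕ) : ℝ) ≤ (Real.exp 1 * d) ^ (a - 1) := by
  obtain ⟨m, rfl⟩ : ∃ m, a = m + 1 := ⟨a - 1, by omega⟩
  simp only [Nat.add_sub_cancel]
  have h1 : (((m + 1) * d).choose m : ℝ) ≤ (((m + 1) * d : ℕ) : ℝ) ^ m / m.factorial :=
    Nat.choose_le_pow_div m ((m + 1) * d)
  have hfac : (0 : ℝ) < m.factorial := by positivity
  
  calc (((m + 1) * d).choose m : ℝ)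
      ≤ (((m + 1) * d : ℕ) : ℝ) ^ m / m.factorial := h1
    _ ≤ (Real.exp 1 * d) ^ m := by
        rw [div_le_iff₀ hfac]
        have h2 : (((m + 1) * d : ℕ) : ℝ) ^ m = ((m + 1 : ℝ)) ^ m * (d : ℝ) ^ m := by
          push_cast; rw [mul_pow]
        rw [h2]
        calc ((m + 1 : ℝ)) ^ m * (d : ℝ) ^ m
            ≤ (Real.exp 1 ^ m * m.factorial) * (d : ℝ) ^ m := by
              apply mul_le_mul_of_nonneg_right (succ_pow_le m) (by positivity)
          _ = (Real.exp 1 * d) ^ m * m.factorial := by rw [mul_pow]; ring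

end Stmt8

end



/-- If `G` has maximum degree at most `d` and `v` is a vertex, then for every
`a ≥ 1` the number of subgraphs of `G` that are trees containing `v` with exactly `a`
vertices is at most `(e·d)^(a−1)`. -/
theorem statement_8 {V : Type*} [Fintype V] (G : SimpleGraph V) [DecidableRel G.Adj]
    (d : ℕ) (hd : ∀ u : V, G.degree u ≤ d) (v : V) (a : ℕ) (ha : 1 ≤ a) :
    (({H : G.Subgraph | v ∈ H.verts ∧ H.coe.IsTree ∧ H.verts.ncard = a} :
        Set G.Subgraph).ncard : ℝ) ≤ (Real.exp 1 * d) ^ (a - 1) := by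
  letI : LinearOrder V := LinearOrder.lift' (Fintype.equivFin V) (Fintype.equivFin V).injective
  classical
  set S : Set G.Subgraph := {H | v ∈ H.verts ∧ H.coe.IsTree ∧ H.verts.ncard = a} with hS
  have hinj : S.InjOn (fun H => Stmt8.code G H v) := by
    rintro H ⟨hv1, ht1, hc1⟩ H' ⟨hv2, ht2, hc2⟩ he
    exact Stmt8.code_inj ha hv1 ht1 hc1 hv2 ht2 hc2 he
  have himg : (fun H => Stmt8.code G H v) '' S ⊆
      ↑(Finset.powersetCard (a - 1) (Finset.range a ×ˢ Finset.range d)) := by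
    rintro c ⟨H, ⟨hv1, ht1, hc1⟩, rfl⟩
    rw [Finset.mem_coe, Finset.mem_powersetCard]
    exact ⟨Stmt8.code_subset hv1 ht1 hd hc1, by rw [Stmt8.code_card hv1 ht1, hc1]⟩
  have h1 : S.ncard ≤ (a * d).choose (a - 1) := by
    rw [← Set.ncard_image_of_injOn hinj]
    have h2 := Set.ncard_le_ncard himg (Finset.finite_toSet _)
    rwa [Set.ncard_coe_finset, Finset.card_powersetCard, Finset.card_product,
      Finset.card_range, Finset.card_range] at h2
  calc (S.ncard : ℝ) ≤ (((a * d).choose (a - 1) : ℕ) : ℝ) := by exact_mod_cast h1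
    _ ≤ (Real.exp 1 * d) ^ (a - 1) := Stmt8.choose_bound a d ha
end

section
/- For every k ≥ 1 and every A ⊆ L_k with |A| = a ≤ k, the neighborhood in M satisfies |N(A)| ≥ k·a − C(a,2), where C(a,2) = a(a−1)/2. -/
open MeasureTheory Finset Filter

lemma card_of_mem_Lk {k : ℕ} {u : Finset (Fin (2 * k - 1))} (hu : u ∈ Lk k) : u.card = k := by
  simpa [Lk, Finset.mem_powersetCard] using hu

lemma nbrLow_insert {k : ℕ} {u : Finset (Fin (2 * k - 1))}
    (hu : u.card = k) (s : Finset (Finset (Fin (2 * k - 1)))) :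
    nbrLow k (insert u s) = u.powersetCard (k - 1) ∪ nbrLow k s := by
  ext w
  simp only [nbrLow, Lk1, Finset.mem_filter, Finset.mem_powersetCard, Finset.mem_union,
    Finset.mem_insert]
  constructor
  · rintro ⟨⟨-, hcard⟩, v, hv | hv, hwv⟩
    · exact Or.inl ⟨hv ▸ hwv, hcard⟩
    · exact Or.inr ⟨⟨Finset.subset_univ _, hcard⟩, v, hv, hwv⟩
  · rintro (⟨hwu, hcard⟩ | ⟨⟨-, hcard⟩, v, hv, hwv⟩)
    · exact ⟨⟨Finset.subset_univ _, hcard⟩, u, Or.inl rfl, hwu⟩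
    · exact ⟨⟨Finset.subset_univ _, hcard⟩, v, Or.inr hv, hwv⟩

lemma pair_inter_card {k : ℕ} {u v : Finset (Fin (2 * k - 1))}
    (hu : u.card = k) (hv : v.card = k) (huv : u ≠ v) :
    (u.powersetCard (k - 1) ∩ v.powersetCard (k - 1)).card ≤ 1 := by
  have hsub : u.powersetCard (k - 1) ∩ v.powersetCard (k - 1) ⊆ {u ∩ v} := by
    intro w hw
    simp only [Finset.mem_inter, Finset.mem_powersetCard] at hw
    obtain ⟨⟨hwu, hwc⟩, hwv, -⟩ := hw
    have hwi : w ⊆ u ∩ v := Finset.subset_inter hwu hwv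
    have hle : (u ∩ v).card ≤ k := by
      have := Finset.card_le_card (Finset.inter_subset_left (s₁ := u) (s₂ := v))
      omega
    have hne : (u ∩ v).card ≠ k := by
      intro h
      have h1 : u ∩ v = u := Finset.eq_of_subset_of_card_le Finset.inter_subset_left (by omega)
      have h2 : u ⊆ v := h1 ▸ Finset.inter_subset_right
      exact huv (Finset.eq_of_subset_of_card_le h2 (by omega))
    have hic : (u ∩ v).card ≤ k - 1 := by omega
    have : w = u ∩ v := Finset.eq_of_subset_of_card_le hwi (by omega)
    simp [this]
  calc (u.powersetCard (k - 1) ∩ v.powersetCard (k - 1)).card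
      ≤ ({u ∩ v} : Finset _).card := Finset.card_le_card hsub
    _ = 1 := Finset.card_singleton _

lemma inter_nbr_card {k : ℕ} {u : Finset (Fin (2 * k - 1))} (hu : u.card = k)
    {s : Finset (Finset (Fin (2 * k - 1)))} (hs : s ⊆ Lk k) (hus : u ∉ s) :
    (u.powersetCard (k - 1) ∩ nbrLow k s).card ≤ s.card := by
  classical
  have hsub : u.powersetCard (k - 1) ∩ nbrLow k s ⊆
      s.biUnion (fun v => u.powersetCard (k - 1) ∩ v.powersetCard (k - 1)) := by
    intro w hw
    simp only [Finset.mem_inter, nbrLow, Lk1, Finset.mem_filter, Finset.mem_powersetCard,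
      Finset.mem_biUnion] at hw ⊢
    obtain ⟨hwu, ⟨-, hwc⟩, v, hv, hwv⟩ := hw
    exact ⟨v, hv, hwu, hwv, hwc⟩
  calc (u.powersetCard (k - 1) ∩ nbrLow k s).card
      ≤ (s.biUnion fun v => u.powersetCard (k - 1) ∩ v.powersetCard (k - 1)).card :=
        Finset.card_le_card hsub
    _ ≤ ∑ v ∈ s, (u.powersetCard (k - 1) ∩ v.powersetCard (k - 1)).card :=
        Finset.card_biUnion_le
    _ ≤ ∑ _v ∈ s, 1 := Finset.sum_le_sum (fun v hv =>
        pair_inter_card hu (card_of_mem_Lk (hs hv)) (fun h => hus (h ▸ hv)))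
    _ = s.card := by simp

lemma statement_9_aux (k : ℕ) (hk : 1 ≤ k) (A : Finset (Finset (Fin (2 * k - 1))))
    (hA : A ⊆ Lk k) :
    (k : ℝ) * A.card - (A.card : ℝ) * ((A.card : ℝ) - 1) / 2 ≤ ((nbrLow k A).card : ℝ) := by
  classical
  induction A using Finset.induction_on with
  | empty => simp [nbrLow]
  | @insert u s hus ih =>
    have hu : u.card = k := card_of_mem_Lk (hA (Finset.mem_insert_self u s))
    have hsLk : s ⊆ Lk k := fun v hv => hA (Finset.mem_insert_of_mem hv)
    have ihs := ih hsLk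
    have hN : nbrLow k (insert u s) = u.powersetCard (k - 1) ∪ nbrLow k s :=
      nbrLow_insert hu s
    have hcardN : (u.powersetCard (k - 1)).card = k := by
      rw [Finset.card_powersetCard, hu]
      rw [Nat.choose_symm hk, Nat.choose_one_right]
    have hkey : (u.powersetCard (k - 1) ∪ nbrLow k s).card
        + (u.powersetCard (k - 1) ∩ nbrLow k s).card
        = (u.powersetCard (k - 1)).card + (nbrLow k s).card :=
      Finset.card_union_add_card_inter _ _
    have hint : (u.powersetCard (k - 1) ∩ nbrLow k s).card ≤ s.card :=
      inter_nbr_card hu hsLk hus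
    have hmain : (nbrLow k s).card + k ≤ (nbrLow k (insert u s)).card + s.card := by
      rw [hN]; omega
    have hmainR : ((nbrLow k s).card : ℝ) + k ≤ ((nbrLow k (insert u s)).card : ℝ) + s.card := by
      exact_mod_cast hmain
    rw [Finset.card_insert_of_notMem hus]
    push_cast
    linarith

/-- For `k ≥ 1` and `A ⊆ L_k` with `|A| = a ≤ k`,
`|N(A)| ≥ k·a − a(a−1)/2`. -/
theorem statement_9 (k : ℕ) (hk : 1 ≤ k) (A : Finset (Finset (Fin (2 * k - 1))))
    (hA : A ⊆ Lk k) (ha : A.card ≤ k) :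
    (k : ℝ) * A.card - (A.card : ℝ) * ((A.card : ℝ) - 1) / 2 ≤ ((nbrLow k A).card : ℝ) := by
  exact statement_9_aux k hk A hA
end

section
/- Fix a constant p with 1/2 < p < 1 and let X = 𝒫(n)_p. Then with high probability the total number of nearly isolated sets (over all layers) is at most 2^{n/2}. -/
open MeasureTheory Finset Filter
open scoped ENNReal NNReal

/-- A set `v` of size `k` is nearly isolated with respect to `X` if `v ∈ X` and:
for `k ≥ ⌈n/2⌉` (i.e. `2k ≥ n`) at most one `(k-1)`-subset of `v` is in `X`;
for `k ≤ ⌊n/2⌋` (i.e. `2k ≤ n`) at most one `(k+1)`-superset of `v` is in `X`. -/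
def NearlyIsolated (n : ℕ) (X : Finset (Finset (Fin n))) (v : Finset (Fin n)) : Prop :=
  v ∈ X ∧
    ((n ≤ 2 * v.card ∧ (X.filter (fun w => w ⊆ v ∧ w.card + 1 = v.card)).card ≤ 1) ∨
     (2 * v.card ≤ n ∧ (X.filter (fun w => v ⊆ w ∧ w.card = v.card + 1)).card ≤ 1))

lemma bern_false (p : ℝ) : bern p {false} = ENNReal.ofReal (1 - p) := by
  simp [bern, Measure.dirac_apply]

lemma bern_univ (p : ℝ) (hp0 : 0 ≤ p) (hp1 : p ≤ 1) : bern p Set.univ = 1 := by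
  simp [bern, ← ENNReal.ofReal_add hp0 (by linarith : (0:ℝ) ≤ 1 - p)]

lemma bern_prob (p : ℝ) (hp0 : 0 ≤ p) (hp1 : p ≤ 1) : IsProbabilityMeasure (bern p) :=
  ⟨bern_univ p hp0 hp1⟩

lemma allMeasurable {ι : Type*} [Fintype ι] (s : Set (ι → Bool)) : MeasurableSet s := by
  haveI : MeasurableSingletonClass (ι → Bool) := ⟨fun ω => by
    have h : ({ω} : Set (ι → Bool)) = Set.pi Set.univ (fun i => {ω i}) := by
      ext g; simp [Set.mem_pi, funext_iff]
    rw [h]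
    exact MeasurableSet.univ_pi fun i => measurableSet_singleton _⟩
  exact s.to_countable.measurableSet

lemma pSpace_prob (ι : Type*) [Fintype ι] (p : ℝ) (hp0 : 0 ≤ p) (hp1 : p ≤ 1) :
    IsProbabilityMeasure (pSpace ι p) := by
  haveI := bern_prob p hp0 hp1
  rw [pSpace]; infer_instance

lemma pSpace_all_false {ι : Type*} [Fintype ι] (p : ℝ) (hp0 : 0 ≤ p) (hp1 : p ≤ 1)
    (T : Finset ι) :
    pSpace ι p {ω | ∀ i ∈ T, ω i = false} = ENNReal.ofReal (1 - p) ^ T.card := by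
  classical
  haveI := bern_prob p hp0 hp1
  have h : {ω : ι → Bool | ∀ i ∈ T, ω i = false}
      = Set.pi Set.univ (fun i => if i ∈ T then {false} else Set.univ) := by
    ext ω
    simp only [Set.mem_pi, Set.mem_univ, Set.mem_setOf_eq, true_implies]
    constructor
    · intro h i; split <;> simp_all
    · intro h i hi; have := h i; simp [hi] at this; exact this
  rw [pSpace, h, Measure.pi_pi]
  have h2 : ∀ i ∈ Finset.univ (α := ι), bern p (if i ∈ T then {false} else Set.univ)
      = if i ∈ T then ENNReal.ofReal (1 - p) else 1 := by
    intro i _; by_cases hi : i ∈ T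
    · simp [hi, bern_false]
    · simp only [hi, if_false]; exact bern_univ p hp0 hp1
  rw [Finset.prod_congr rfl h2, Finset.prod_ite_mem, Finset.univ_inter, Finset.prod_const]

lemma atmost_one_bound {ι : Type*} [Fintype ι] [DecidableEq ι]
    (p : ℝ) (hp0 : 0 ≤ p) (hp1 : p ≤ 1) (S : Finset ι) (hS : S.Nonempty) :
    pSpace ι p {ω | (S.filter (fun i => ω i = true)).card ≤ 1}
      ≤ S.card * ENNReal.ofReal (1 - p) ^ (S.card - 1) := by
  have hsub : {ω : ι → Bool | (S.filter (fun i => ω i = true)).card ≤ 1}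
      ⊆ ⋃ i ∈ S, {ω | ∀ j ∈ S.erase i, ω j = false} := by
    intro ω hω
    simp only [Set.mem_setOf_eq] at hω
    rcases (S.filter (fun i => ω i = true)).eq_empty_or_nonempty with he | ⟨a, ha⟩
    · obtain ⟨i, hi⟩ := hS
      refine Set.mem_biUnion hi ?_
      intro j hj
      by_contra hj'
      have hjm : j ∈ S.filter (fun i => ω i = true) := by
        rw [Finset.mem_erase] at hj
        exact Finset.mem_filter.2 ⟨hj.2, by simpa using hj'⟩
      simp [he] at hjm
    · have haS : a ∈ S := (Finset.mem_filter.1 ha).1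
      refine Set.mem_biUnion haS ?_
      intro j hj
      rw [Finset.mem_erase] at hj
      by_contra hj'
      have hjf : j ∈ S.filter (fun i => ω i = true) :=
        Finset.mem_filter.2 ⟨hj.2, by simpa using hj'⟩
      have h2 : 1 < (S.filter (fun i => ω i = true)).card :=
        Finset.one_lt_card.2 ⟨a, ha, j, hjf, fun h => hj.1 h.symm⟩
      omega
  calc pSpace ι p _ ≤ _ := measure_mono hsub
    _ ≤ ∑ i ∈ S, pSpace ι p {ω | ∀ j ∈ S.erase i, ω j = false} :=
        measure_biUnion_finset_le _ _
    _ = ∑ _i ∈ S, ENNReal.ofReal (1 - p) ^ (S.card - 1) := by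
        refine Finset.sum_congr rfl fun i hi => ?_
        rw [pSpace_all_false p hp0 hp1, Finset.card_erase_of_mem hi]
    _ = S.card * ENNReal.ofReal (1 - p) ^ (S.card - 1) := by
        rw [Finset.sum_const, nsmul_eq_mul]

lemma card_S1 {n : ℕ} (v : Finset (Fin n)) (hv : 1 ≤ v.card) :
    (Finset.univ.filter (fun w : Finset (Fin n) => w ⊆ v ∧ w.card + 1 = v.card)).card
      = v.card := by
  have h : Finset.univ.filter (fun w : Finset (Fin n) => w ⊆ v ∧ w.card + 1 = v.card)
      = v.powersetCard (v.card - 1) := by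
    ext w
    simp only [Finset.mem_filter, Finset.mem_univ, true_and, Finset.mem_powersetCard]
    constructor <;> rintro ⟨h1, h2⟩ <;> exact ⟨h1, by omega⟩
  rw [h, Finset.card_powersetCard, ← Nat.choose_symm (Nat.sub_le _ _),
    Nat.sub_sub_self hv, Nat.choose_one_right]

lemma card_S2 {n : ℕ} (v : Finset (Fin n)) :
    (Finset.univ.filter (fun w : Finset (Fin n) => v ⊆ w ∧ w.card = v.card + 1)).card
      = n - v.card := by
  have h : Finset.univ.filter (fun w : Finset (Fin n) => v ⊆ w ∧ w.card = v.card + 1)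
      = (vᶜ).image (fun x => insert x v) := by
    ext w
    simp only [Finset.mem_filter, Finset.mem_univ, true_and, Finset.mem_image,
      Finset.mem_compl]
    constructor
    · rintro ⟨hsub, hcard⟩
      have h1 : (w \ v).card = 1 := by rw [Finset.card_sdiff_of_subset hsub]; omega
      obtain ⟨x, hx⟩ := Finset.card_eq_one.1 h1
      have hxw : x ∈ w \ v := hx ▸ Finset.mem_singleton_self x
      rw [Finset.mem_sdiff] at hxw
      refine ⟨x, hxw.2, ?_⟩
      apply Finset.Subset.antisymm
      · intro y hy
        rcases Finset.mem_insert.1 hy with h | h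
        · exact h ▸ hxw.1
        · exact hsub h
      · intro y hy
        by_cases hyv : y ∈ v
        · exact Finset.mem_insert_of_mem hyv
        · have : y ∈ w \ v := Finset.mem_sdiff.2 ⟨hy, hyv⟩
          rw [hx, Finset.mem_singleton] at this
          exact this ▸ Finset.mem_insert_self _ _
    · rintro ⟨x, hxv, rfl⟩
      exact ⟨Finset.subset_insert _ _, Finset.card_insert_of_notMem hxv⟩
  rw [h, Finset.card_image_of_injOn, Finset.card_compl, Fintype.card_fin]
  intro x hx y hy hxy
  simp only [Finset.mem_coe, Finset.mem_compl] at hx hy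
  have hmem : x ∈ insert y v := by
    have := Finset.mem_insert_self x v
    simpa only [hxy] using this
  rcases Finset.mem_insert.1 hmem with h | h
  · exact h
  · exact absurd h hx

lemma filter_sample {n : ℕ} (ω : Finset (Fin n) → Bool) (P : Finset (Fin n) → Prop)
    [DecidablePred P] :
    (sample ω).filter P = (Finset.univ.filter P).filter (fun w => ω w = true) := by
  ext w; simp [sample, and_comm]

lemma key_bound {n : ℕ} (hn : 1 ≤ n) (p : ℝ) (hp0 : 0 ≤ p) (hp1 : p ≤ 1)
    (v : Finset (Fin n)) :
    pSpace (Finset (Fin n)) p {ω | NearlyIsolated n (sample ω) v}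
      ≤ 2 * n * ENNReal.ofReal (1 - p) ^ (n - n / 2 - 1) := by
  set q := ENNReal.ofReal (1 - p) with hq
  have hq1 : q ≤ 1 := by
    rw [hq]; exact ENNReal.ofReal_le_one.2 (by linarith)
  set S1 := Finset.univ.filter (fun w : Finset (Fin n) => w ⊆ v ∧ w.card + 1 = v.card)
    with hS1
  set S2 := Finset.univ.filter (fun w : Finset (Fin n) => v ⊆ w ∧ w.card = v.card + 1)
    with hS2
  set B1 : Set (Finset (Fin n) → Bool) :=
    {ω | n ≤ 2 * v.card ∧ (S1.filter (fun w => ω w = true)).card ≤ 1} with hB1d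
  set B2 : Set (Finset (Fin n) → Bool) :=
    {ω | 2 * v.card ≤ n ∧ (S2.filter (fun w => ω w = true)).card ≤ 1} with hB2d
  have hsub : {ω | NearlyIsolated n (sample ω) v} ⊆ B1 ∪ B2 := by
    intro ω hω
    obtain ⟨-, hcase⟩ := hω
    rcases hcase with ⟨h1, h2⟩ | ⟨h1, h2⟩
    · left
      rw [filter_sample] at h2
      exact ⟨h1, h2⟩
    · right
      rw [filter_sample] at h2
      exact ⟨h1, h2⟩
  have genbound : ∀ (S : Finset (Finset (Fin n))) (c : Prop)
      (hSc : c → (1 ≤ S.card ∧ n - n / 2 ≤ S.card ∧ S.card ≤ n)),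
      pSpace (Finset (Fin n)) p {ω | c ∧ (S.filter (fun w => ω w = true)).card ≤ 1}
        ≤ n * q ^ (n - n / 2 - 1) := by
    intro S c hSc
    by_cases hc : c
    · obtain ⟨hc1, hc2, hc3⟩ := hSc hc
      have heq : {ω : Finset (Fin n) → Bool | c ∧ (S.filter (fun w => ω w = true)).card ≤ 1}
          = {ω | (S.filter (fun w => ω w = true) ).card ≤ 1} := by
        ext ω; simp [hc]
      rw [heq]
      calc pSpace (Finset (Fin n)) p _
          ≤ S.card * q ^ (S.card - 1) :=
            atmost_one_bound p hp0 hp1 S (Finset.card_pos.1 hc1)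
        _ ≤ n * q ^ (n - n / 2 - 1) := by
            apply mul_le_mul'
            · exact_mod_cast Nat.cast_le.2 hc3
            · exact pow_le_pow_right_of_le_one' hq1 (by omega)
    · have heq : {ω : Finset (Fin n) → Bool | c ∧ (S.filter (fun w => ω w = true)).card ≤ 1}
          = ∅ := by
        ext ω; simp [hc]
      rw [heq]; simp
  have hvn : v.card ≤ n := by
    have := Finset.card_le_univ v
    simpa using this
  have hB1 : pSpace (Finset (Fin n)) p B1 ≤ n * q ^ (n - n / 2 - 1) := by
    apply genbound
    intro hc
    have hv1 : 1 ≤ v.card := by omega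
    have := card_S1 v hv1
    rw [← hS1] at this
    omega
  have hB2 : pSpace (Finset (Fin n)) p B2 ≤ n * q ^ (n - n / 2 - 1) := by
    apply genbound
    intro hc
    have := card_S2 v
    rw [← hS2] at this
    omega
  calc pSpace (Finset (Fin n)) p {ω | NearlyIsolated n (sample ω) v}
      ≤ pSpace (Finset (Fin n)) p (B1 ∪ B2) := measure_mono hsub
    _ ≤ pSpace (Finset (Fin n)) p B1 + pSpace (Finset (Fin n)) p B2 := measure_union_le _ _
    _ ≤ n * q ^ (n - n / 2 - 1) + n * q ^ (n - n / 2 - 1) := add_le_add hB1 hB2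
    _ = 2 * n * q ^ (n - n / 2 - 1) := by ring

lemma lintegral_count {n : ℕ} (p : ℝ) :
    ∫⁻ ω, (({v : Finset (Fin n) | NearlyIsolated n (sample ω) v}).ncard : ℝ≥0∞)
        ∂(pSpace (Finset (Fin n)) p)
      = ∑ v : Finset (Fin n),
          pSpace (Finset (Fin n)) p {ω | NearlyIsolated n (sample ω) v} := by
  classical
  have hfun : ∀ ω : Finset (Fin n) → Bool,
      (({v : Finset (Fin n) | NearlyIsolated n (sample ω) v}).ncard : ℝ≥0∞)
      = ∑ v : Finset (Fin n),
          Set.indicator {ω' | NearlyIsolated n (sample ω') v} (fun _ => (1:ℝ≥0∞)) ω := by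
    intro ω
    have h1 : {v : Finset (Fin n) | NearlyIsolated n (sample ω) v}
        = ↑(Finset.univ.filter fun v => NearlyIsolated n (sample ω) v) := by
      ext v; simp
    rw [h1, Set.ncard_coe_finset, Finset.card_filter, Nat.cast_sum]
    refine Finset.sum_congr rfl fun v _ => ?_
    by_cases h : NearlyIsolated n (sample ω) v <;> simp [h, Set.indicator_apply]
  simp_rw [hfun]
  rw [lintegral_finset_sum]
  · refine Finset.sum_congr rfl fun v _ => ?_
    exact lintegral_indicator_one (allMeasurable _)
  · intro v _
    exact Measurable.indicator measurable_const (allMeasurable _)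

/-- For constant `1/2 < p < 1`, with high probability the number of
nearly isolated sets (over all layers) of `X = 𝒫(n)_p` is at most `2^(n/2)`. -/
theorem statement_12 (p : ℝ) (hp : 1 / 2 < p) (hp1 : p < 1) :
    Filter.Tendsto (fun n : ℕ =>
      ((pSpace (Finset (Fin n)) p)
        {ω | (({v : Finset (Fin n) | NearlyIsolated n (sample ω) v}).ncard : ℝ)
              ≤ (2 : ℝ) ^ ((n : ℝ) / 2)}).toReal)
      Filter.atTop (nhds 1) := by
  have hp0 : (0:ℝ) ≤ p := by linarith
  have hp1' : p ≤ 1 := le_of_lt hp1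
  set c : ℝ := 1 - p with hcdef
  have hc0 : 0 < c := by rw [hcdef]; linarith
  have hchalf : c < 1/2 := by rw [hcdef]; linarith
  -- the bad sets and their measures
  set G : ∀ n : ℕ, Set (Finset (Fin n) → Bool) := fun n =>
    {ω | (({v : Finset (Fin n) | NearlyIsolated n (sample ω) v}).ncard : ℝ)
              ≤ (2 : ℝ) ^ ((n : ℝ) / 2)} with hGdef
  set g : ℕ → ℝ := fun n => ((pSpace (Finset (Fin n)) p) (G n)ᶜ).toReal with hgdef
  -- the bound sequence
  set s : ℝ := Real.sqrt 2 * Real.sqrt c with hsdef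
  have hs0 : 0 ≤ s := by positivity
  have hs1 : s < 1 := by
    rw [hsdef, ← Real.sqrt_mul (by norm_num : (0:ℝ) ≤ 2)]
    rw [Real.sqrt_lt' one_pos]
    linarith
  set bnd : ℕ → ℝ := fun n => (2 / c) * (n * s ^ n) with hbnddef
  have hbnd0 : Tendsto bnd atTop (nhds 0) := by
    have h := (tendsto_self_mul_const_pow_of_lt_one hs0 hs1).const_mul (2 / c)
    simpa [hbnddef] using h
  -- the key estimate
  have key : ∀ n : ℕ, 2 ≤ n → g n ≤ bnd n := by
    intro n hn2
    have hn1 : 1 ≤ n := by omega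
    set μ := pSpace (Finset (Fin n)) p with hμ
    haveI : IsProbabilityMeasure μ := pSpace_prob _ p hp0 hp1'
    set q := ENNReal.ofReal c with hqdef
    set e := n - n / 2 - 1 with hedef
    set m := n - n / 2 with hmdef
    have hme : e + 1 = m := by omega
    have hn2m : n ≤ 2 * m := by omega
    -- Markov
    set f : (Finset (Fin n) → Bool) → ℝ≥0∞ := fun ω =>
      (({v : Finset (Fin n) | NearlyIsolated n (sample ω) v}).ncard : ℝ≥0∞) with hfdef
    have hfm : Measurable f := fun _ _ => allMeasurable _
    set ε : ℝ≥0∞ := ENNReal.ofReal ((2:ℝ) ^ ((n:ℝ) / 2)) with hεdef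
    have htpos : (0:ℝ) < (2:ℝ) ^ ((n:ℝ) / 2) := by positivity
    have hε0 : ε ≠ 0 := by
      rw [hεdef]; simp only [ne_eq, ENNReal.ofReal_eq_zero, not_le]; exact htpos
    have hεtop : ε ≠ ⊤ := ENNReal.ofReal_ne_top
    have hbadsub : (G n)ᶜ ⊆ {ω | ε ≤ f ω} := by
      intro ω hω
      simp only [hGdef, Set.mem_compl_iff, Set.mem_setOf_eq, not_le] at hω
      have : ε ≤ ENNReal.ofReal
          ((({v : Finset (Fin n) | NearlyIsolated n (sample ω) v}).ncard : ℝ)) :=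
        ENNReal.ofReal_le_ofReal hω.le
      rwa [ENNReal.ofReal_natCast] at this
    have hmarkov : μ ((G n)ᶜ) ≤ (∫⁻ ω, f ω ∂μ) / ε :=
      le_trans (measure_mono hbadsub) (meas_ge_le_lintegral_div hfm.aemeasurable hε0 hεtop)
    -- bound integral
    have hint : (∫⁻ ω, f ω ∂μ) ≤ ENNReal.ofReal ((2:ℝ) ^ n * (2 * n * c ^ e)) := by
      rw [hfdef, hμ, lintegral_count]
      calc ∑ v : Finset (Fin n), pSpace (Finset (Fin n)) p {ω | NearlyIsolated n (sample ω) v}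
          ≤ ∑ _v : Finset (Fin n), 2 * (n:ℝ≥0∞) * q ^ e :=
            Finset.sum_le_sum fun v _ => key_bound hn1 p hp0 hp1' v
        _ = (2 ^ n : ℕ) * (2 * (n:ℝ≥0∞) * q ^ e) := by
            rw [Finset.sum_const, Finset.card_univ, Fintype.card_finset, Fintype.card_fin,
              nsmul_eq_mul]
        _ = ENNReal.ofReal ((2:ℝ) ^ n * (2 * n * c ^ e)) := by
            rw [ENNReal.ofReal_mul (by positivity), ENNReal.ofReal_mul (by positivity),
              ENNReal.ofReal_pow (by norm_num), ENNReal.ofReal_pow hc0.le,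
              ENNReal.ofReal_mul (by norm_num), ENNReal.ofReal_ofNat,
              ENNReal.ofReal_natCast, hqdef]
            push_cast
            ring
    -- to real bound
    set r : ℝ := (2:ℝ) ^ n * (2 * n * c ^ e) / (2:ℝ) ^ ((n:ℝ) / 2) with hrdef
    have hr0 : 0 ≤ r := by rw [hrdef]; positivity
    have hgr : g n ≤ r := by
      apply ENNReal.toReal_le_of_le_ofReal hr0
      rw [hrdef, ENNReal.ofReal_div_of_pos htpos]
      exact le_trans hmarkov (by gcongr)
    -- bound r by bnd n
    have hrbnd : r ≤ bnd n := by
      have h2pow : (2:ℝ) ^ ((n:ℝ) / 2) = Real.sqrt 2 ^ n := by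
        rw [Real.sqrt_eq_rpow, ← Real.rpow_natCast ((2:ℝ) ^ ((1:ℝ)/2)) n,
          ← Real.rpow_mul (by norm_num : (0:ℝ) ≤ 2)]
        congr 1; ring
      have h2n : (2:ℝ) ^ n = Real.sqrt 2 ^ n * Real.sqrt 2 ^ n := by
        rw [← mul_pow, Real.mul_self_sqrt (by norm_num)]
      have hsq2pos : (0:ℝ) < Real.sqrt 2 ^ n := by positivity
      have hre : r = (2 * n / c) * (Real.sqrt 2 ^ n * c ^ m) := by
        rw [hrdef, h2pow, h2n, ← hme, pow_succ]
        field_simp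
      have hcm : c ^ m ≤ Real.sqrt c ^ n := by
        have h1 : Real.sqrt c ^ (2 * m) ≤ Real.sqrt c ^ n :=
          pow_le_pow_of_le_one (Real.sqrt_nonneg c)
            (by rw [show (1:ℝ) = Real.sqrt 1 by simp]; exact Real.sqrt_le_sqrt (by linarith))
            hn2m
        have h2 : Real.sqrt c ^ (2 * m) = c ^ m := by
          rw [pow_mul, Real.sq_sqrt hc0.le]
        linarith
      have hbndeq : bnd n = (2 * n / c) * (Real.sqrt 2 ^ n * Real.sqrt c ^ n) := by
        simp only [hbnddef]
        rw [hsdef, mul_pow]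
        ring
      rw [hre, hbndeq]
      apply mul_le_mul_of_nonneg_left _ (by positivity)
      exact mul_le_mul_of_nonneg_left hcm (by positivity)
    linarith
  -- conclude
  have hg0 : ∀ n, 0 ≤ g n := fun n => ENNReal.toReal_nonneg
  have hgtend : Tendsto g atTop (nhds 0) := by
    refine tendsto_of_tendsto_of_tendsto_of_le_of_le' tendsto_const_nhds hbnd0
      (Eventually.of_forall hg0) ?_
    filter_upwards [eventually_ge_atTop 2] with n hn using key n hn
  have heq : ∀ n : ℕ, ((pSpace (Finset (Fin n)) p) (G n)).toReal = 1 - g n := by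
    intro n
    haveI : IsProbabilityMeasure (pSpace (Finset (Fin n)) p) := pSpace_prob _ p hp0 hp1'
    have h1 : (pSpace (Finset (Fin n)) p) (G n)ᶜ = 1 - (pSpace (Finset (Fin n)) p) (G n) :=
      prob_compl_eq_one_sub (allMeasurable _)
    have h2 : g n = 1 - ((pSpace (Finset (Fin n)) p) (G n)).toReal := by
      simp only [hgdef]
      rw [h1, ENNReal.toReal_sub_of_le prob_le_one ENNReal.one_ne_top, ENNReal.toReal_one]
    have h3 : ((pSpace (Finset (Fin n)) p) (G n)).toReal ≤ 1 := by
      exact ENNReal.toReal_le_of_le_ofReal one_pos.le (by simpa using prob_le_one)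
    linarith
  have : Tendsto (fun n : ℕ => 1 - g n) atTop (nhds 1) := by
    have h := (tendsto_const_nhds : Tendsto (fun _ : ℕ => (1:ℝ)) atTop (nhds 1)).sub hgtend
    simpa using h
  exact this.congr fun n => (heq n).symm
end
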